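/- arXiv:1411.3595 — 3 statements merged into one kernel-verified Lean document; each statement's English description precedes it below -/
import Mathlib

section
/- Let M ⊂ ℝ^k be a manifold of class C^r with r ≥ 2 around a point x ∈ M. Then there exists δ > 0 such that for every y in the open ball B(x, δ) there is a unique nearest point P(y) of M to y, and the nearest-point projection map P : B(x, δ) → M is of class C^{r−1}. -/
open Set Metric

noncomputable section

/-- `M ⊆ ℝ^k` is a `C^r` manifold (of some codimension `c`) around the point `x ∈ M`:
there are an open set `V ∋ x` and a `C^r` map `F : V → ℝ^c` whose derivative is
surjective (full rank) on `M ∩ V`, such that `M ∩ V = {y ∈ V | F y = 0}`. -/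
def IsCrManifoldAt (k r : ℕ) (M : Set (EuclideanSpace ℝ (Fin k)))
    (x : EuclideanSpace ℝ (Fin k)) : Prop :=
  ∃ (c : ℕ) (V : Set (EuclideanSpace ℝ (Fin k)))
    (F : EuclideanSpace ℝ (Fin k) → EuclideanSpace ℝ (Fin c)),
      IsOpen V ∧ x ∈ V ∧ ContDiffOn ℝ r F V ∧
      (∀ y ∈ M ∩ V, Function.Surjective (fderiv ℝ F y)) ∧
      M ∩ V = {y ∈ V | F y = 0}

/-!
Near `x`, write `M = {F = 0}` with `DF` surjective. By Lagrange's theorem a nearest point `z ∈ M`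
to `y` satisfies `y - z = DF(z)* μ` for some multiplier `μ`, i.e. `(z, μ)` is a preimage of
`(y, 0)` under the normal map `Φ (p, μ) = (p + DF(p)* μ, F p)`. The map `Φ` is `C^{r-1}` and its
derivative at `(x, 0)`, the block operator `(I, T*; T, 0)` with `T = DF(x)` surjective, is
invertible; so `Φ` has a `C^{r-1}` local inverse `g` there, and `P y := (g (y, 0)).1` is the
candidate projection. For `y` close to `x`, any nearest point `z` is close to `x`, and its
multiplier is small because `DF(z)*` is uniformly injective near `x`; hence `(z, μ)` lies where
`g ∘ Φ = id`, forcing `z = P y`. Nearest points exist since `M` is locally closed.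
-/

open Filter Function Topology
open scoped ContDiff NNReal InnerProductSpace

section MetricSpace

variable {X Y : Type*} [PseudoMetricSpace X] [PseudoMetricSpace Y]

theorem eventually_forall_of_dist_le_mul_dist {x : X} {y₀ : Y} {Q : Y → Prop}
    (hQ : ∀ᶠ z in 𝓝 y₀, Q z) (C : ℝ) :
    ∀ᶠ y in 𝓝 x, ∀ z, dist z y₀ ≤ C * dist y x → Q z := by
  obtain ⟨ε, hε, hQε⟩ := Metric.eventually_nhds_iff.mp hQ
  have hC : Tendsto (fun y => C * dist y x) (𝓝 x) (𝓝 0) :=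
    (continuous_const.mul (continuous_id.dist continuous_const)).tendsto' x 0 (by simp)
  filter_upwards [hC.eventually (gt_mem_nhds hε)] with y hy z hz
  exact hQε (hz.trans_lt hy)

theorem eventually_exists_isMinOn_dist [ProperSpace X] {M : Set X} {x : X} (hx : x ∈ M)
    {ε : ℝ} (hε : 0 < ε) (hM : IsClosed (M ∩ closedBall x ε)) :
    ∀ᶠ y in 𝓝 x, ∃ z ∈ M, IsMinOn (dist y) M z := by
  filter_upwards [ball_mem_nhds x (half_pos hε)] with y hy
  have hxε : x ∈ M ∩ closedBall x ε := ⟨hx, mem_closedBall_self hε.le⟩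
  obtain ⟨z, ⟨hzM, -⟩, hz⟩ :=
    ((isCompact_closedBall x ε).of_isClosed_subset hM inter_subset_right).exists_isMinOn
      ⟨x, hxε⟩ (continuous_const.dist continuous_id).continuousOn
  refine ⟨z, hzM, isMinOn_iff.mpr fun w hwM => ?_⟩
  by_cases hw : w ∈ closedBall x ε
  · exact isMinOn_iff.mp hz w ⟨hwM, hw⟩
  · have hzx : dist y z ≤ dist y x := isMinOn_iff.mp hz x hxε
    rw [mem_ball] at hy
    rw [mem_closedBall, not_le] at hw
    linarith [dist_triangle w y x, dist_comm y w]

theorem exists_isClosed_inter_closedBall {Z : Type*} [TopologicalSpace Z] [Zero Z] [T1Space Z]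
    {F : X → Z} {M V : Set X} {x : X} (hV : IsOpen V) (hxV : x ∈ V) (hF : ContinuousOn F V)
    (hMV : M ∩ V = {y ∈ V | F y = 0}) :
    ∃ ε > 0, IsClosed (M ∩ closedBall x ε) := by
  obtain ⟨ε, hε, hεV⟩ := nhds_basis_closedBall.mem_iff.mp (hV.mem_nhds hxV)
  refine ⟨ε, hε, ?_⟩
  have hM : M ∩ closedBall x ε = closedBall x ε ∩ F ⁻¹' {0} := by
    ext w
    have hw := Set.ext_iff.mp hMV w
    have := @hεV w
    simp only [mem_inter_iff, mem_ofPred_eq, mem_preimage, mem_singleton_iff] at hw ⊢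
    tauto
  rw [hM]
  exact (hF.mono hεV).preimage_isClosed_of_isClosed isClosed_closedBall isClosed_singleton

end MetricSpace

theorem exists_eventually_norm_le_mul_norm_apply {𝕜 X E G : Type*} [NontriviallyNormedField 𝕜]
    [CompleteSpace 𝕜] [TopologicalSpace X] [NormedAddCommGroup E] [NormedSpace 𝕜 E]
    [NormedAddCommGroup G] [NormedSpace 𝕜 G] [FiniteDimensional 𝕜 G]
    {A : X → G →L[𝕜] E} {x : X} (hA : ContinuousAt A x) (hinj : Injective (A x)) :
    ∃ K : ℝ≥0, ∀ᶠ p in 𝓝 x, ∀ μ, ‖μ‖ ≤ K * ‖A p μ‖ := by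
  obtain ⟨K, hK, hanti⟩ :=
    (A x : G →ₗ[𝕜] E).exists_antilipschitzWith (LinearMap.ker_eq_bot.mpr hinj)
  refine ⟨2 * K, ?_⟩
  have hK' : (0 : ℝ) < K := hK
  have hδ : (0 : ℝ) < (2 * K)⁻¹ := by positivity
  filter_upwards [hA.eventually (ball_mem_nhds (A x) hδ)] with p hp μ
  have hx : ‖μ‖ ≤ K * ‖A x μ‖ := by simpa using hanti.le_mul_dist μ 0
  have hp : ‖A x μ‖ ≤ ‖A p μ‖ + (2 * (K : ℝ))⁻¹ * ‖μ‖ := calc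
    ‖A x μ‖ ≤ ‖A p μ‖ + ‖(A x - A p) μ‖ := by
      simpa using norm_add_le (A p μ) ((A x - A p) μ)
    _ ≤ ‖A p μ‖ + (2 * (K : ℝ))⁻¹ * ‖μ‖ := by
      gcongr
      refine ((A x - A p).le_opNorm μ).trans (mul_le_mul_of_nonneg_right ?_ (norm_nonneg μ))
      simpa [dist_eq_norm', mem_ball] using hp.le
  have hK2 : (K : ℝ) * ((2 * (K : ℝ))⁻¹ * ‖μ‖) = ‖μ‖ / 2 := by field_simp
  push_cast
  nlinarith

section NormalMap

variable {E G : Type*} [NormedAddCommGroup E] [InnerProductSpace ℝ E] [CompleteSpace E]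
  [NormedAddCommGroup G] [InnerProductSpace ℝ G] [CompleteSpace G]

/-- `ContinuousLinearMap.adjoint` is only conjugate-linear; over `ℝ` it is bundled as a continuous
linear map so that the `ContDiff` calculus applies to it. -/
def adjointCLM : (E →L[ℝ] G) →L[ℝ] G →L[ℝ] E :=
  LinearMap.mkContinuous
    { toFun := ContinuousLinearMap.adjoint
      map_add' := map_add _
      map_smul' := fun a B => by simp }
    1 fun B => by simp

@[simp]
theorem adjointCLM_apply (B : E →L[ℝ] G) : adjointCLM B = B.adjoint := rfl

theorem injective_adjoint_of_surjective {T : E →L[ℝ] G} (hT : Surjective T) :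
    Injective T.adjoint := by
  have hker : LinearMap.ker (T.adjoint : G →ₗ[ℝ] E) = ⊥ := by
    rw [← T.orthogonal_range, LinearMap.range_eq_top.mpr hT, Submodule.top_orthogonal_eq_bot]
  exact LinearMap.ker_eq_bot.mp hker

def normalMap (F : E → G) (q : E × G) : E × G :=
  (q.1 + (fderiv ℝ F q.1).adjoint q.2, F q.1)

def normalMapDeriv (T : E →L[ℝ] G) : E × G →L[ℝ] E × G :=
  (.fst ℝ E G + T.adjoint ∘L .snd ℝ E G).prod (T ∘L .fst ℝ E G)

theorem injective_normalMapDeriv {T : E →L[ℝ] G} (hT : Surjective T) :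
    Injective (normalMapDeriv T) := by
  refine (injective_iff_map_eq_zero _).mpr fun ⟨p, μ⟩ h => ?_
  obtain ⟨hp, hTp⟩ : p + T.adjoint μ = 0 ∧ T p = 0 := by simpa [normalMapDeriv] using h
  have hμ : T.adjoint μ = 0 := by
    rw [← inner_self_eq_zero (𝕜 := ℝ), ContinuousLinearMap.adjoint_inner_left,
      ← neg_eq_of_add_eq_zero_right hp, map_neg, hTp, neg_zero, inner_zero_right]
  rw [hμ, add_zero] at hp
  simp [hp, injective_adjoint_of_surjective hT (hμ.trans (map_zero _).symm)]

theorem contDiffAt_normalMap {n : WithTop ℕ∞} {F : E → G} {p : E}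
    (hF : ContDiffAt ℝ (n + 1) F p) (μ : G) : ContDiffAt ℝ n (normalMap F) (p, μ) := by
  have hA : ContDiffAt ℝ n (fun q : E × G => adjointCLM (fderiv ℝ F q.1)) (p, μ) :=
    ((hF.fderiv_right (m := n) le_rfl).comp (p, μ) contDiffAt_fst).continuousLinearMap_comp
      adjointCLM
  exact (contDiffAt_fst.add (hA.clm_apply contDiffAt_snd)).prodMk
    ((hF.of_le le_self_add).comp _ contDiffAt_fst)

theorem hasFDerivAt_normalMap_zero {F : E → G} {x : E} (hF : DifferentiableAt ℝ F x)
    (hF' : DifferentiableAt ℝ (fderiv ℝ F) x) :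
    HasFDerivAt (normalMap F) (normalMapDeriv (fderiv ℝ F x)) ((x, 0) : E × G) := by
  have hA : HasFDerivAt (fun q : E × G => adjointCLM (fderiv ℝ F q.1) q.2)
      ((fderiv ℝ F x).adjoint ∘L .snd ℝ E G) ((x, 0) : E × G) := by
    have hA₁ := (adjointCLM.hasFDerivAt.comp x hF'.hasFDerivAt).comp ((x, 0) : E × G)
        (hasFDerivAt_fst (𝕜 := ℝ) (p := ((x, 0) : E × G)))
    simpa using hA₁.clm_apply hasFDerivAt_snd
  exact (hasFDerivAt_fst.add hA).prodMk (hF.hasFDerivAt.comp ((x, 0) : E × G) hasFDerivAt_fst)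

theorem exists_adjoint_apply_eq_sub_of_isLocalMinOn [FiniteDimensional ℝ G] {F : E → G}
    {F' : E →L[ℝ] G} {y z : E} (hF : HasStrictFDerivAt F F' z) (hF' : Surjective F')
    (hmin : IsLocalMinOn (dist y) {w | F w = F z} z) : ∃ μ, F'.adjoint μ = y - z := by
  have hφ : HasStrictFDerivAt (fun w => ‖w - y‖ ^ 2) (2 • innerSL ℝ (z - y)) z := by
    simpa using (hasStrictFDerivAt_norm_sq (z - y)).comp z ((hasStrictFDerivAt_id z).sub_const y)
  have hmin' : IsLocalMinOn (fun w => ‖w - y‖ ^ 2) {w | F w = F z} z :=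
    Filter.Eventually.mono hmin fun w hw => by
      simpa only [dist_eq_norm'] using pow_le_pow_left₀ dist_nonneg hw 2
  obtain ⟨Λ, Λ₀, hne, hΛ⟩ :=
    IsLocalExtrOn.exists_linear_map_of_hasStrictFDerivAt (Or.inl hmin') hF hφ
  have hΛ₀ : Λ₀ ≠ 0 := by
    rintro rfl
    refine hne (Prod.ext (LinearMap.ext fun u => ?_) rfl)
    obtain ⟨v, rfl⟩ := hF' u
    simpa using hΛ v
  have hnormal : y - z ∈ F'.kerᗮ := fun v hv => by
    rw [LinearMap.mem_ker, ContinuousLinearMap.coe_coe] at hv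
    have h := hΛ v
    rw [hv, map_zero, zero_add, smul_eq_zero, or_iff_right hΛ₀] at h
    have hzy : ⟪z - y, v⟫_ℝ = 0 := by simpa [inner_sub_left] using h
    rw [real_inner_comm, ← neg_sub, inner_neg_left, hzy, neg_zero]
  rwa [F'.orthogonal_ker, (Submodule.closed_of_finiteDimensional _).submodule_topologicalClosure_eq]
    at hnormal

theorem exists_normalMap_eq_of_isMinOn [FiniteDimensional ℝ G] {F : E → G} {M V : Set E}
    (hV : IsOpen V) (hMV : M ∩ V = {w ∈ V | F w = 0}) {y z : E} (hzM : z ∈ M) (hzV : z ∈ V)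
    (hF : HasStrictFDerivAt F (fderiv ℝ F z) z) (hF' : Surjective (fderiv ℝ F z))
    (hmin : IsMinOn (dist y) M z) : ∃ μ, normalMap F (z, μ) = (y, 0) := by
  have hFz : F z = 0 := (hMV.subset ⟨hzM, hzV⟩).2
  have hloc : IsLocalMinOn (dist y) {w | F w = F z} z := by
    filter_upwards [nhdsWithin_le_nhds (hV.mem_nhds hzV), self_mem_nhdsWithin] with w hwV hwF
    exact isMinOn_iff.mp hmin w (hMV.superset ⟨hwV, hwF.trans hFz⟩).1
  obtain ⟨μ, hμ⟩ := exists_adjoint_apply_eq_sub_of_isLocalMinOn hF hF' hloc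
  exact ⟨μ, by simp [normalMap, hμ, hFz]⟩

theorem exists_localInverse_normalMap [FiniteDimensional ℝ E] [FiniteDimensional ℝ G]
    {n : WithTop ℕ∞} (hn : n ≠ 0) {F : E → G} {x : E} (hF : ContDiffAt ℝ (n + 1) F x)
    (hFx : F x = 0) (hT : Surjective (fderiv ℝ F x)) :
    ∃ g : E × G → E × G, ContDiffAt ℝ n g (x, 0) ∧
      ∀ᶠ q in 𝓝 ((x, 0) : E × G), g (normalMap F q) = q := by
  let e : (E × G) ≃L[ℝ] E × G :=
    (LinearEquiv.ofInjectiveEndo _ (injective_normalMapDeriv hT)).toContinuousLinearEquiv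
  have hΦ := contDiffAt_normalMap hF 0
  have hΦ' : HasFDerivAt (normalMap F) (e : E × G →L[ℝ] E × G) (x, 0) :=
    hasFDerivAt_normalMap_zero (hF.differentiableAt (by simp))
      ((hF.fderiv_right (m := n) le_rfl).differentiableAt hn)
  have hΦx : normalMap F (x, 0) = (x, 0) := by simp [normalMap, hFx]
  have hg := hΦ.to_localInverse hΦ' hn
  rw [hΦx] at hg
  exact ⟨_, hg, (hΦ.hasStrictFDerivAt' hΦ' hn).eventually_left_inverse⟩

theorem exists_eventually_contDiffAt_eq_of_isMinOn [FiniteDimensional ℝ E]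
    [FiniteDimensional ℝ G] {n : WithTop ℕ∞} (hn : n ≠ 0) (hn_top : n ≠ ∞) {F : E → G}
    {M V : Set E} {x : E} (hV : IsOpen V) (hxV : x ∈ V) (hx : x ∈ M)
    (hF : ContDiffOn ℝ (n + 1) F V) (hsurj : ∀ y ∈ M ∩ V, Surjective (fderiv ℝ F y))
    (hMV : M ∩ V = {y ∈ V | F y = 0}) :
    ∃ P : E → E, (∀ᶠ y in 𝓝 x, ContDiffAt ℝ n P y) ∧
      ∀ᶠ y in 𝓝 x, ∀ z ∈ M, IsMinOn (dist y) M z → z = P y := by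
  have hFat : ∀ p ∈ V, ContDiffAt ℝ (n + 1) F p := fun p hp => hF.contDiffAt (hV.mem_nhds hp)
  have hTx := hsurj x ⟨hx, hxV⟩
  obtain ⟨g, hg, hleft⟩ := exists_localInverse_normalMap hn
    (hFat x hxV) (hMV.subset ⟨hx, hxV⟩).2 hTx
  refine ⟨fun y => (g (y, 0)).1, ?_, ?_⟩
  · exact (contDiffAt_fst.comp x (hg.comp x (contDiffAt_id.prodMk contDiffAt_const))).eventually
      hn_top
  obtain ⟨K, hK⟩ := exists_eventually_norm_le_mul_norm_apply
    (adjointCLM.continuous.continuousAt.comp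
      ((hFat x hxV).fderiv_right (m := n) le_rfl).continuousAt)
    (injective_adjoint_of_surjective hTx)
  filter_upwards [eventually_forall_of_dist_le_mul_dist (hK.and (hV.mem_nhds hxV)) 2,
    eventually_forall_of_dist_le_mul_dist hleft (2 + K)] with y hy hy' z hzM hz
  have hzy : dist y z ≤ dist y x := isMinOn_iff.mp hz x hx
  have hzx : dist z x ≤ 2 * dist y x := by linarith [dist_triangle z y x, dist_comm z y]
  obtain ⟨hKz, hzV⟩ := hy z hzx
  obtain ⟨μ, hμ⟩ := exists_normalMap_eq_of_isMinOn hV hMV hzM hzV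
    ((hFat z hzV).hasStrictFDerivAt (by simp)) (hsurj z ⟨hzM, hzV⟩) hz
  have hAμ : (fderiv ℝ F z).adjoint μ = y - z := by
    have h := congrArg Prod.fst hμ
    simp only [normalMap] at h
    rw [← h, add_sub_cancel_left]
  have hμK : ‖μ‖ ≤ K * dist y x := calc
    ‖μ‖ ≤ K * ‖(fderiv ℝ F z).adjoint μ‖ := hKz μ
    _ ≤ K * dist y x := by rw [hAμ, ← dist_eq_norm]; gcongr
  have hzμ : dist (z, μ) (x, 0) ≤ (2 + K) * dist y x := by
    rw [Prod.dist_eq, dist_zero_right]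
    exact max_le (hzx.trans (by gcongr; exact le_add_of_nonneg_right K.2))
      (hμK.trans (by gcongr; exact le_add_of_nonneg_left zero_le_two))
  have hgy := hy' (z, μ) hzμ
  rw [hμ] at hgy
  exact (congrArg Prod.fst hgy).symm

end NormalMap

/-- **Local regularity of the nearest-point projection.**
If `M ⊆ ℝ^k` is a `C^r` manifold (`r ≥ 2`) around a point `x ∈ M`, then there is `δ > 0`
and a map `P` on `B(x, δ)` such that for every `y ∈ B(x, δ)`, `P y` is the unique nearest
point of `M` to `y`, and `P` is of class `C^{r-1}` on `B(x, δ)`. -/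
theorem projection_regularity (k r : ℕ) (hr : 2 ≤ r)
    (M : Set (EuclideanSpace ℝ (Fin k))) (x : EuclideanSpace ℝ (Fin k)) (hx : x ∈ M)
    (hM : IsCrManifoldAt k r M x) :
    ∃ δ > (0 : ℝ), ∃ P : EuclideanSpace ℝ (Fin k) → EuclideanSpace ℝ (Fin k),
      (∀ y ∈ ball x δ,
        P y ∈ M ∧ (∀ z ∈ M, dist y (P y) ≤ dist y z) ∧
        (∀ z ∈ M, dist y z = dist y (P y) → z = P y)) ∧
      ContDiffOn ℝ (r - 1) P (ball x δ) := by
  obtain ⟨c, V, F, hV, hxV, hF, hsurj, hMV⟩ := hM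
  rw [show (r : WithTop ℕ∞) - 1 = (r - 1 : ℕ) by norm_cast]
  obtain ⟨P, hP_smooth, hP_nearest⟩ :=
    exists_eventually_contDiffAt_eq_of_isMinOn (n := (r - 1 : ℕ))
      (by exact_mod_cast (by omega : r - 1 ≠ 0)) (by simp) hV hxV hx
      (hF.of_le (by exact_mod_cast (by omega : r - 1 + 1 ≤ r))) hsurj hMV
  obtain ⟨ε, hε, hclosed⟩ := exists_isClosed_inter_closedBall hV hxV hF.continuousOn hMV
  obtain ⟨δ, hδ, hball⟩ := Metric.eventually_nhds_iff_ball.mp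
    ((hP_smooth.and hP_nearest).and (eventually_exists_isMinOn_dist hx hε hclosed))
  refine ⟨δ, hδ, P, fun y hy => ?_, fun y hy => (hball y hy).1.1.contDiffWithinAt⟩
  obtain ⟨⟨-, hP⟩, z, hzM, hz⟩ := hball y hy
  obtain rfl := hP z hzM hz
  exact ⟨hzM, isMinOn_iff.mp hz, fun w hwM hw =>
    hP w hwM (isMinOn_iff.mpr fun v hv => hw ▸ isMinOn_iff.mp hz v hv)⟩

end
end

section
/- Fix k ∈ ℤ and let n_k(x) = (cos(2kπx), sin(2kπx)). For v ∈ C^∞_0((0,1), ℝ²) let w_t = (n_k + t v)/|n_k + t v| and w' = (d/dt)|_{t=0} w_t = v − n_k (n_k·v). Then the second variation of the Dirichlet energy I(n) = ∫₀¹ |n'|² dx satisfies (d²/dt²)|_{t=0} I(w_t) = 2 ∫₀¹ |(w')'|² − 4k²π² |w'|² dx, and writing w'(x) = f(x)(sin(2kπx), −cos(2kπx)) with f ∈ W^{1,2}_0(0,1), this equals ... ≥ π² ∫₀¹ |w'|² dx; moreover there exists γ > 0 such that (d²/dt²)|_{t=0} I(w_t) ≥ γ ‖w'‖²_{W^{1,2}}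 for all v ∈ C^∞_0((0,1), ℝ²). -/
open Set MeasureTheory Real RealInnerProductSpace

noncomputable section

/-- The plane `ℝ²` with its Euclidean structure. -/
abbrev E2 : Type := EuclideanSpace ℝ (Fin 2)

/-- The degree-`k` circle map `n_k(x) = (cos(2kπx), sin(2kπx))`. -/
def nk (k : ℤ) (x : ℝ) : E2 :=
  (WithLp.equiv 2 (Fin 2 → ℝ)).symm ![Real.cos (2 * k * π * x), Real.sin (2 * k * π * x)]

/-- `e₁ = (1, 0)`. -/
def e1 : E2 := (WithLp.equiv 2 (Fin 2 → ℝ)).symm ![1, 0]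

/-- The Dirichlet energy `I(n) = ∫₀¹ |n'(x)|² dx`. -/
def dirichlet (n : ℝ → E2) : ℝ := ∫ x in (0 : ℝ)..1, ‖deriv n x‖ ^ 2

/-- The admissible class `𝒜 = {n ∈ W^{1,2}((0,1), S¹) : n(0) = n(1) = e₁}`:
(absolutely) continuous maps into the unit circle with square-integrable
derivative and boundary value `e₁`. -/
def Adm1 (n : ℝ → E2) : Prop :=
  ContinuousOn n (Icc (0 : ℝ) 1) ∧
  IntegrableOn (fun x => ‖deriv n x‖ ^ 2) (Ioo (0 : ℝ) 1) volume ∧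
  (∀ z ∈ Icc (0 : ℝ) 1, n z = n 0 + ∫ s in (0 : ℝ)..z, deriv n s) ∧
  (∀ x ∈ Icc (0 : ℝ) 1, ‖n x‖ = 1) ∧ n 0 = e1 ∧ n 1 = e1

/-- Test functions `C^∞_0((0,1), ℝ²)`. -/
def TestV (v : ℝ → E2) : Prop := ContDiff ℝ (⊤ : ℕ∞) v ∧ tsupport v ⊆ Ioo (0 : ℝ) 1

/-- The projected (tangential) variation `w' = v − n_k (n_k·v)`. -/
def wprime (k : ℤ) (v : ℝ → E2) (x : ℝ) : E2 := v x - ⟪nk k x, v x⟫ • nk k x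

/-- The perturbed energy `g(t) = I((n_k + t v)/|n_k + t v|)`. -/
def gpert (k : ℤ) (v : ℝ → E2) (t : ℝ) : ℝ :=
  dirichlet (fun x => ‖nk k x + t • v x‖⁻¹ • (nk k x + t • v x))

namespace SV
open Filter Topology Interval

lemma alg1 (u0 u1 d0 d1 r : ℝ) (hr : 0 < r) (h2 : r^2 = u0^2+u1^2) :
    (r⁻¹*d0 - ((u0*d0+u1*d1)/r)*u0/r^2)^2 + (r⁻¹*d1 - ((u0*d0+u1*d1)/r)*u1/r^2)^2
      = (u0*d1-u1*d0)^2/(r^2)^2 := by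
  have hr0 : r ≠ 0 := ne_of_gt hr
  have e0 : (r⁻¹*d0 - ((u0*d0+u1*d1)/r)*u0/r^2)^2
      = (d0*(u0^2+u1^2) - (u0*d0+u1*d1)*u0)^2/(u0^2+u1^2)^3 := by
    rw [← h2]; field_simp
  have e1 : (r⁻¹*d1 - ((u0*d0+u1*d1)/r)*u1/r^2)^2
      = (d1*(u0^2+u1^2) - (u0*d0+u1*d1)*u1)^2/(u0^2+u1^2)^3 := by
    rw [← h2]; field_simp
  have hR0 : u0^2+u1^2 ≠ 0 := by rw [← h2]; positivity
  rw [e0, e1, h2]; field_simp; ring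

lemma norm_sq_E2 (y : E2) : ‖y‖^2 = y 0^2 + y 1^2 := by
  rw [EuclideanSpace.norm_eq, Real.sq_sqrt (by positivity)]
  simp [Fin.sum_univ_two]

lemma norm_E2 (y : E2) : ‖y‖ = Real.sqrt (y 0^2 + y 1^2) := by
  rw [EuclideanSpace.norm_eq]; simp [Fin.sum_univ_two]

lemma inner_E2 (x y : E2) : ⟪x, y⟫ = x 0 * y 0 + x 1 * y 1 := by
  simp [PiLp.inner_apply, Fin.sum_univ_two, RCLike.inner_apply]
  ring

lemma hasDerivAt_E2 {f g : ℝ → ℝ} {f' g' x : ℝ} (hf : HasDerivAt f f' x) (hg : HasDerivAt g g' x) :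
    HasDerivAt (fun y => ((WithLp.equiv 2 (Fin 2 → ℝ)).symm ![f y, g y] : E2))
      ((WithLp.equiv 2 (Fin 2 → ℝ)).symm ![f', g']) x := by
  have hp : HasDerivAt (fun y => (![f y, g y] : Fin 2 → ℝ)) ![f', g'] x := by
    rw [hasDerivAt_pi]; intro i; fin_cases i <;> simpa
  exact
    ((EuclideanSpace.equiv (Fin 2) ℝ).symm.toContinuousLinearMap.hasFDerivAt).comp_hasDerivAt x hp

lemma hasDerivAt_comp_E2 {h : ℝ → E2} {d : E2} {x : ℝ} (hh : HasDerivAt h d x) (i : Fin 2) :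
    HasDerivAt (fun y => h y i) (d i) x := by
  exact (EuclideanSpace.proj (𝕜 := ℝ) i).hasFDerivAt.comp_hasDerivAt x hh

variable (k : ℤ) (v : ℝ → E2)

def th (k : ℤ) : ℝ := 2 * k * π
def N0 (x : ℝ) : ℝ := Real.cos (th k * x)
def N1 (x : ℝ) : ℝ := Real.sin (th k * x)
def V0 (x : ℝ) : ℝ := v x 0
def V1 (x : ℝ) : ℝ := v x 1
def DV0 (x : ℝ) : ℝ := deriv v x 0
def DV1 (x : ℝ) : ℝ := deriv v x 1
def Af (x : ℝ) : ℝ := N0 k x * V0 v x + N1 k x * V1 v x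
def Bf (x : ℝ) : ℝ := N0 k x * V1 v x - N1 k x * V0 v x
def Sf (x : ℝ) : ℝ := V0 v x^2 + V1 v x^2
def B0 (x : ℝ) : ℝ := N0 k x * DV1 v x - N1 k x * DV0 v x - th k * Af k v x
def B1 (x : ℝ) : ℝ := V0 v x * DV1 v x - V1 v x * DV0 v x - th k * Sf v x
def Rf (t x : ℝ) : ℝ := 1 + 2*t*Af k v x + t^2 * Sf v x
def Kf (t x : ℝ) : ℝ := (B0 k v x + t*B1 k v x)^2 / (Rf k v t x)^2

lemma pyth (x : ℝ) : N0 k x^2 + N1 k x^2 = 1 := by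
  rw [N0, N1]; exact Real.cos_sq_add_sin_sq (th k * x)

lemma hasDerivAt_N0 (x : ℝ) : HasDerivAt (N0 k) (-(th k) * N1 k x) x := by
  show HasDerivAt (fun x => Real.cos (th k * x)) _ x
  simpa [N0, N1, mul_comm, Function.comp_def] using (Real.hasDerivAt_cos (th k * x)).comp x
    ((hasDerivAt_id x).const_mul (th k))

lemma hasDerivAt_N1 (x : ℝ) : HasDerivAt (N1 k) (th k * N0 k x) x := by
  show HasDerivAt (fun x => Real.sin (th k * x)) _ x
  simpa [N1, N0, mul_comm, Function.comp_def] using (Real.hasDerivAt_sin (th k * x)).comp x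
    ((hasDerivAt_id x).const_mul (th k))

lemma hasDerivAt_V0 {v : ℝ → E2} (hv : ContDiff ℝ (⊤ : ℕ∞) v) (x : ℝ) :
    HasDerivAt (V0 v) (DV0 v x) x :=
  hasDerivAt_comp_E2 (hv.differentiable (by simp)).differentiableAt.hasDerivAt 0
lemma hasDerivAt_V1 {v : ℝ → E2} (hv : ContDiff ℝ (⊤ : ℕ∞) v) (x : ℝ) :
    HasDerivAt (V1 v) (DV1 v x) x :=
  hasDerivAt_comp_E2 (hv.differentiable (by simp)).differentiableAt.hasDerivAt 1

lemma u_eq (t : ℝ) :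
    (fun y => nk k y + t • v y) = fun y =>
      ((WithLp.equiv 2 (Fin 2 → ℝ)).symm ![N0 k y + t * V0 v y, N1 k y + t * V1 v y] : E2) := by
  funext y
  ext i
  fin_cases i <;>
    simp [nk, N0, N1, V0, V1, th]

lemma hasDerivAt_u {v : ℝ → E2} (hv : ContDiff ℝ (⊤ : ℕ∞) v) (t x : ℝ) :
    HasDerivAt (fun y => nk k y + t • v y)
      ((WithLp.equiv 2 (Fin 2 → ℝ)).symm
        ![-(th k) * N1 k x + t * DV0 v x, th k * N0 k x + t * DV1 v x]) x := by
  rw [u_eq]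
  exact hasDerivAt_E2
    (((hasDerivAt_N0 k x).add ((hasDerivAt_V0 hv x).const_mul t)))
    (((hasDerivAt_N1 k x).add ((hasDerivAt_V1 hv x).const_mul t)))

lemma Rf_eq (t x : ℝ) :
    Rf k v t x = (N0 k x + t * V0 v x)^2 + (N1 k x + t * V1 v x)^2 := by
  have := pyth k x
  simp only [Rf, Af, Sf]; nlinarith [this]

lemma norm_u (t x : ℝ) :
    ‖nk k x + t • v x‖ = Real.sqrt ((N0 k x + t * V0 v x)^2 + (N1 k x + t * V1 v x)^2) := by
  rw [norm_E2]
  congr 1 <;> simp [nk, N0, N1, V0, V1, th]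

-- key pointwise lemma
lemma L1 {v : ℝ → E2} (hv : ContDiff ℝ (⊤ : ℕ∞) v) (t x : ℝ) (hR : 0 < Rf k v t x) :
    ‖deriv (fun y => ‖nk k y + t • v y‖⁻¹ • (nk k y + t • v y)) x‖^2
      = th k^2 + 2*(th k)*(t*(B0 k v x + t*B1 k v x))/Rf k v t x + t^2 * Kf k v t x := by
  set u0 : ℝ → ℝ := fun y => N0 k y + t * V0 v y with hu0
  set u1 : ℝ → ℝ := fun y => N1 k y + t * V1 v y with hu1
  set d0 : ℝ := -(th k) * N1 k x + t * DV0 v x with hd0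
  set d1 : ℝ := th k * N0 k x + t * DV1 v x with hd1
  have hRr : Rf k v t x = u0 x^2 + u1 x^2 := Rf_eq k v t x
  have hrpos : (0:ℝ) < Real.sqrt (u0 x^2 + u1 x^2) := Real.sqrt_pos.2 (hRr ▸ hR)
  set r : ℝ := Real.sqrt (u0 x^2 + u1 x^2) with hrdef
  have hr2 : r^2 = u0 x^2 + u1 x^2 := Real.sq_sqrt (by rw [← hRr]; exact hR.le)
  have hr0 : r ≠ 0 := ne_of_gt hrpos
  -- derivative of u
  have hu : HasDerivAt (fun y => nk k y + t • v y)
      ((WithLp.equiv 2 (Fin 2 → ℝ)).symm ![d0, d1]) x := hasDerivAt_u k hv t x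
  -- derivative of the norm
  have hnorm : HasDerivAt (fun y => ‖nk k y + t • v y‖) ((u0 x * d0 + u1 x * d1)/r) x := by
    have hsq : HasDerivAt (fun y => u0 y^2 + u1 y^2) (2*(u0 x)*d0 + 2*(u1 x)*d1) x := by
      have h0 : HasDerivAt u0 d0 x :=
        (hasDerivAt_N0 k x).add ((hasDerivAt_V0 hv x).const_mul t)
      have h1 : HasDerivAt u1 d1 x :=
        (hasDerivAt_N1 k x).add ((hasDerivAt_V1 hv x).const_mul t)
      simpa [mul_comm, mul_assoc, two_mul, Pi.add_def, Pi.pow_def] using ((h0.pow 2).add (h1.pow 2))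
    have := (Real.hasDerivAt_sqrt (by rw [← hRr]; exact ne_of_gt hR)).comp x hsq
    have heq : (fun y => ‖nk k y + t • v y‖) = fun y => Real.sqrt (u0 y^2 + u1 y^2) := by
      funext y; exact norm_u k v t y
    rw [heq]
    refine this.congr_deriv (Eq.symm ?_)
    rw [← hrdef]
    field_simp
  -- derivative of the inverse norm
  have hinv : HasDerivAt (fun y => ‖nk k y + t • v y‖⁻¹)
      (-((u0 x * d0 + u1 x * d1)/r)/r^2) x := by
    have := hnorm.inv (by rw [norm_u]; exact hr0)
    refine this.congr_deriv (Eq.symm ?_)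
    rw [norm_u]
  -- derivative of w
  have hw : HasDerivAt (fun y => ‖nk k y + t • v y‖⁻¹ • (nk k y + t • v y))
      ((‖nk k x + t • v x‖⁻¹) • ((WithLp.equiv 2 (Fin 2 → ℝ)).symm ![d0, d1])
        + (-((u0 x * d0 + u1 x * d1)/r)/r^2) • (nk k x + t • v x)) x :=
    hinv.smul hu
  rw [hw.deriv, norm_sq_E2]
  have hux0 : (nk k x + t • v x) 0 = u0 x := by simp [nk, N0, N1, V0, V1, th, hu0]
  have hux1 : (nk k x + t • v x) 1 = u1 x := by simp [nk, N0, N1, V0, V1, th, hu1]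
  have happ0 : ((‖nk k x + t • v x‖⁻¹) • ((WithLp.equiv 2 (Fin 2 → ℝ)).symm ![d0, d1])
        + (-((u0 x * d0 + u1 x * d1)/r)/r^2) • (nk k x + t • v x)) 0
      = r⁻¹*d0 - ((u0 x*d0+u1 x*d1)/r)*(u0 x)/r^2 := by
    simp only [PiLp.add_apply, PiLp.smul_apply, smul_eq_mul, hux0,
      WithLp.equiv_symm_apply, PiLp.toLp_apply, Matrix.cons_val_zero]
    rw [norm_u, ← hRr, hRr]
    ring
  have happ1 : ((‖nk k x + t • v x‖⁻¹) • ((WithLp.equiv 2 (Fin 2 → ℝ)).symm ![d0, d1])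
        + (-((u0 x * d0 + u1 x * d1)/r)/r^2) • (nk k x + t • v x)) 1
      = r⁻¹*d1 - ((u0 x*d0+u1 x*d1)/r)*(u1 x)/r^2 := by
    simp only [PiLp.add_apply, PiLp.smul_apply, smul_eq_mul, hux1,
      WithLp.equiv_symm_apply, PiLp.toLp_apply, Matrix.cons_val_one, Matrix.head_cons,
      Matrix.cons_val_zero]
    rw [norm_u, ← hRr, hRr]
    ring
  rw [happ0, happ1, alg1 (u0 x) (u1 x) d0 d1 r hrpos hr2]
  -- now the determinant identity
  have hdet : u0 x * d1 - u1 x * d0 = th k * Rf k v t x + t*(B0 k v x + t*B1 k v x) := by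
    have hp := pyth k x
    simp only [hu0, hu1, hd0, hd1, Rf, Af, Sf, B0, B1]
    linear_combination (th k) * hp
  have hr2R : r^2 = Rf k v t x := by rw [hr2, ← hRr]
  rw [hdet, hr2R]
  have hRne : Rf k v t x ≠ 0 := ne_of_gt hR
  rw [Kf]
  field_simp
  ring


def DAf (x : ℝ) : ℝ := N0 k x * DV0 v x + N1 k x * DV1 v x + th k * Bf k v x

lemma hasDerivAt_Af {v : ℝ → E2} (hv : ContDiff ℝ (⊤ : ℕ∞) v) (x : ℝ) :
    HasDerivAt (Af k v) (DAf k v x) x := by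
  have h := ((hasDerivAt_N0 k x).mul (hasDerivAt_V0 hv x)).add
    ((hasDerivAt_N1 k x).mul (hasDerivAt_V1 hv x))
  refine h.congr_deriv (Eq.symm ?_)
  simp only [DAf, Bf]; ring

lemma hasDerivAt_Bf {v : ℝ → E2} (hv : ContDiff ℝ (⊤ : ℕ∞) v) (x : ℝ) :
    HasDerivAt (Bf k v) (B0 k v x) x := by
  have h := ((hasDerivAt_N0 k x).mul (hasDerivAt_V1 hv x)).sub
    ((hasDerivAt_N1 k x).mul (hasDerivAt_V0 hv x))
  refine h.congr_deriv (Eq.symm ?_)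
  simp only [B0, Af]; ring

-- continuity
lemma contV0 {v : ℝ → E2} (hv : ContDiff ℝ (⊤ : ℕ∞) v) : Continuous (V0 v) := by
  have : Continuous fun y : E2 => y 0 := (EuclideanSpace.proj (𝕜 := ℝ) (0 : Fin 2)).continuous
  exact this.comp hv.continuous
lemma contV1 {v : ℝ → E2} (hv : ContDiff ℝ (⊤ : ℕ∞) v) : Continuous (V1 v) := by
  have : Continuous fun y : E2 => y 1 := (EuclideanSpace.proj (𝕜 := ℝ) (1 : Fin 2)).continuous
  exact this.comp hv.continuous
lemma contDV0 {v : ℝ → E2} (hv : ContDiff ℝ (⊤ : ℕ∞) v) : Continuous (DV0 v) := by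
  have : Continuous fun y : E2 => y 0 := (EuclideanSpace.proj (𝕜 := ℝ) (0 : Fin 2)).continuous
  exact this.comp (hv.continuous_deriv (by simp))
lemma contDV1 {v : ℝ → E2} (hv : ContDiff ℝ (⊤ : ℕ∞) v) : Continuous (DV1 v) := by
  have : Continuous fun y : E2 => y 1 := (EuclideanSpace.proj (𝕜 := ℝ) (1 : Fin 2)).continuous
  exact this.comp (hv.continuous_deriv (by simp))
lemma contN0 : Continuous (N0 k) := (Real.continuous_cos).comp (continuous_const.mul continuous_id)
lemma contN1 : Continuous (N1 k) := (Real.continuous_sin).comp (continuous_const.mul continuous_id)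
lemma contAf {v : ℝ → E2} (hv : ContDiff ℝ (⊤ : ℕ∞) v) : Continuous (Af k v) :=
  ((contN0 k).mul (contV0 hv)).add ((contN1 k).mul (contV1 hv))
lemma contBf {v : ℝ → E2} (hv : ContDiff ℝ (⊤ : ℕ∞) v) : Continuous (Bf k v) :=
  ((contN0 k).mul (contV1 hv)).sub ((contN1 k).mul (contV0 hv))
lemma contSf {v : ℝ → E2} (hv : ContDiff ℝ (⊤ : ℕ∞) v) : Continuous (Sf v) :=
  ((contV0 hv).pow 2).add ((contV1 hv).pow 2)
lemma contB0 {v : ℝ → E2} (hv : ContDiff ℝ (⊤ : ℕ∞) v) : Continuous (B0 k v) :=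
  (((contN0 k).mul (contDV1 hv)).sub ((contN1 k).mul (contDV0 hv))).sub
    (continuous_const.mul (contAf k hv))
lemma contB1 {v : ℝ → E2} (hv : ContDiff ℝ (⊤ : ℕ∞) v) : Continuous (B1 k v) :=
  (((contV0 hv).mul (contDV1 hv)).sub ((contV1 hv).mul (contDV0 hv))).sub
    (continuous_const.mul (contSf hv))
lemma contRf2 {v : ℝ → E2} (hv : ContDiff ℝ (⊤ : ℕ∞) v) :
    Continuous (fun p : ℝ × ℝ => Rf k v p.1 p.2) := by
  unfold Rf
  have h1 : Continuous fun p : ℝ × ℝ => Af k v p.2 := (contAf k hv).comp continuous_snd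
  have h2 : Continuous fun p : ℝ × ℝ => Sf v p.2 := (contSf hv).comp continuous_snd
  continuity

-- the wprime computation
lemma wprime_eq {v : ℝ → E2} :
    wprime k v = fun x =>
      ((WithLp.equiv 2 (Fin 2 → ℝ)).symm ![-(N1 k x) * Bf k v x, N0 k x * Bf k v x] : E2) := by
  funext x
  have hp := pyth k x
  have hinner : ⟪nk k x, v x⟫ = Af k v x := by
    rw [inner_E2]; rfl
  ext i
  fin_cases i
  · show (v x - ⟪nk k x, v x⟫ • nk k x) 0 = _
    rw [hinner]
    simp only [PiLp.sub_apply, PiLp.smul_apply, smul_eq_mul,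
      WithLp.equiv_symm_apply, PiLp.toLp_apply, Matrix.cons_val_zero]
    show V0 v x - Af k v x * N0 k x = -(N1 k x) * Bf k v x
    simp only [Af, Bf]
    linear_combination (-(V0 v x)) * hp
  · show (v x - ⟪nk k x, v x⟫ • nk k x) 1 = _
    rw [hinner]
    simp only [PiLp.sub_apply, PiLp.smul_apply, smul_eq_mul,
      WithLp.equiv_symm_apply, PiLp.toLp_apply, Matrix.cons_val_one, Matrix.head_cons,
      Matrix.cons_val_zero]
    show V1 v x - Af k v x * N1 k x = N0 k x * Bf k v x
    simp only [Af, Bf]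
    linear_combination (-(V1 v x)) * hp

lemma norm_wprime_sq {v : ℝ → E2} (x : ℝ) :
    ‖wprime k v x‖^2 = Bf k v x ^ 2 := by
  rw [wprime_eq, norm_sq_E2]
  have hp := pyth k x
  simp only [WithLp.equiv_symm_apply, PiLp.toLp_apply, Matrix.cons_val_zero, Matrix.cons_val_one,
    Matrix.head_cons]
  linear_combination (Bf k v x ^ 2) * hp

lemma hasDerivAt_wprime {v : ℝ → E2} (hv : ContDiff ℝ (⊤ : ℕ∞) v) (x : ℝ) :
    HasDerivAt (wprime k v)
      ((WithLp.equiv 2 (Fin 2 → ℝ)).symm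
        ![-(th k * N0 k x) * Bf k v x - N1 k x * B0 k v x,
          -(th k * N1 k x) * Bf k v x + N0 k x * B0 k v x]) x := by
  rw [wprime_eq]
  refine hasDerivAt_E2 ?_ ?_
  · have h := ((hasDerivAt_N1 k x).neg.mul (hasDerivAt_Bf k hv x))
    refine h.congr_deriv (Eq.symm ?_); simp only [Pi.neg_apply]; ring
  · have h := ((hasDerivAt_N0 k x).mul (hasDerivAt_Bf k hv x))
    refine h.congr_deriv (Eq.symm ?_); ring

lemma norm_deriv_wprime_sq {v : ℝ → E2} (hv : ContDiff ℝ (⊤ : ℕ∞) v) (x : ℝ) :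
    ‖deriv (wprime k v) x‖^2 = B0 k v x ^ 2 + th k ^2 * Bf k v x ^ 2 := by
  rw [(hasDerivAt_wprime k hv x).deriv, norm_sq_E2]
  have hp := pyth k x
  simp only [WithLp.equiv_symm_apply, PiLp.toLp_apply, Matrix.cons_val_zero, Matrix.cons_val_one,
    Matrix.head_cons]
  linear_combination (B0 k v x ^ 2 + th k ^2 * Bf k v x ^ 2) * hp

lemma hSx {v : ℝ → E2} (x : ℝ) : Af k v x^2 + Bf k v x^2 = Sf v x := by
  have hp := pyth k x
  simp only [Af, Bf, Sf]
  linear_combination (V0 v x^2 + V1 v x^2) * hp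

lemma hasDerivAt_arctanq {v : ℝ → E2} (hv : ContDiff ℝ (⊤ : ℕ∞) v) (t x : ℝ)
    (hpos : 0 < 1 + t * Af k v x) :
    HasDerivAt (fun y => Real.arctan (t * Bf k v y / (1 + t * Af k v y)))
      (t * (B0 k v x + t * B1 k v x) / Rf k v t x) x := by
  have hp := pyth k x
  have hne : 1 + t * Af k v x ≠ 0 := ne_of_gt hpos
  have hRf : Rf k v t x = (1 + t*Af k v x)^2 + t^2*Bf k v x^2 := by
    have := hSx k (v := v) x
    simp only [Rf]
    linear_combination (t^2) * this.symm
  have hRfpos : 0 < Rf k v t x := by rw [hRf]; positivity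
  have hq : HasDerivAt (fun y => t * Bf k v y / (1 + t * Af k v y))
      ((t * B0 k v x * (1 + t * Af k v x) - t * Bf k v x * (t * DAf k v x))
        / (1 + t * Af k v x)^2) x := by
    have hnum : HasDerivAt (fun y => t * Bf k v y) (t * B0 k v x) x :=
      (hasDerivAt_Bf k hv x).const_mul t
    have hden : HasDerivAt (fun y => 1 + t * Af k v y) (t * DAf k v x) x := by
      simpa [Pi.add_def] using (hasDerivAt_const x 1).add ((hasDerivAt_Af k hv x).const_mul t)
    exact hnum.div hden hne
  have hcomp := (Real.hasDerivAt_arctan (t * Bf k v x / (1 + t * Af k v x))).comp x hq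
  refine hcomp.congr_deriv (Eq.symm ?_)
  have hAB : Af k v x * B0 k v x - Bf k v x * DAf k v x = B1 k v x := by
    simp only [Af, Bf, B0, B1, DAf, Sf]
    linear_combination (-(th k) * (V0 v x^2 + V1 v x^2) + V0 v x * DV1 v x - V1 v x * DV0 v x) * hp
  have h1q : 1 + (t * Bf k v x / (1 + t * Af k v x))^2 = Rf k v t x/(1 + t * Af k v x)^2 := by
    rw [hRf]; field_simp
  rw [h1q]
  have hRne : Rf k v t x ≠ 0 := ne_of_gt hRfpos
  rw [← hAB]
  field_simp
  ring

lemma v_zero_at {v : ℝ → E2} (hsupp : tsupport v ⊆ Ioo (0:ℝ) 1) {x : ℝ}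
    (hx : x ∉ Ioo (0:ℝ) 1) : v x = 0 :=
  image_eq_zero_of_notMem_tsupport (fun h => hx (hsupp h))

lemma contRfx {v : ℝ → E2} (hv : ContDiff ℝ (⊤ : ℕ∞) v) (t : ℝ) :
    Continuous (fun x => Rf k v t x) := by
  unfold Rf
  exact (continuous_const.add ((continuous_const.mul (contAf k hv)))).add
    (continuous_const.mul (contSf hv))

lemma int_middle_zero {v : ℝ → E2} (hv : ContDiff ℝ (⊤ : ℕ∞) v) (hsupp : tsupport v ⊆ Ioo (0:ℝ) 1)
    (t : ℝ) (hpos : ∀ x ∈ Icc (0:ℝ) 1, 0 < 1 + t * Af k v x) :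
    ∫ x in (0:ℝ)..1, t * (B0 k v x + t * B1 k v x) / Rf k v t x = 0 := by
  have h0 : v 0 = 0 := v_zero_at hsupp (by simp)
  have h1 : v 1 = 0 := v_zero_at hsupp (by simp)
  have hA0 : Af k v 0 = 0 := by simp [Af, V0, V1, h0]
  have hA1 : Af k v 1 = 0 := by simp [Af, V0, V1, h1]
  have hB0' : Bf k v 0 = 0 := by simp [Bf, V0, V1, h0]
  have hB1' : Bf k v 1 = 0 := by simp [Bf, V0, V1, h1]
  have hderiv : ∀ x ∈ uIcc (0:ℝ) 1,
      HasDerivAt (fun y => Real.arctan (t * Bf k v y / (1 + t * Af k v y)))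
        (t * (B0 k v x + t * B1 k v x) / Rf k v t x) x := by
    intro x hx
    rw [uIcc_of_le (by norm_num)] at hx
    exact hasDerivAt_arctanq k hv t x (hpos x hx)
  have hRfne : ∀ x ∈ uIcc (0:ℝ) 1, Rf k v t x ≠ 0 := by
    intro x hx
    rw [uIcc_of_le (by norm_num)] at hx
    have hRf : Rf k v t x = (1 + t*Af k v x)^2 + t^2*Bf k v x^2 := by
      have := hSx k (v := v) x
      simp only [Rf]
      linear_combination (t^2) * this.symm
    have := hpos x hx
    rw [hRf]; positivity
  have hint : IntervalIntegrable (fun x => t * (B0 k v x + t * B1 k v x) / Rf k v t x)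
      volume 0 1 := by
    apply ContinuousOn.intervalIntegrable
    apply ContinuousOn.div
    · exact (continuous_const.mul ((contB0 k hv).add (continuous_const.mul (contB1 k hv)))).continuousOn
    · exact (contRfx k hv t).continuousOn
    · exact hRfne
  rw [intervalIntegral.integral_eq_sub_of_hasDerivAt hderiv hint]
  simp [hA0, hA1, hB0', hB1']

lemma exists_boundAS {v : ℝ → E2} (hv : ContDiff ℝ (⊤ : ℕ∞) v) :
    ∃ C : ℝ, 0 ≤ C ∧ ∀ x ∈ Icc (0:ℝ) 1, |Af k v x| ≤ C ∧ |Sf v x| ≤ C := by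
  obtain ⟨C, hC⟩ := (isCompact_Icc : IsCompact (Icc (0:ℝ) 1)).exists_bound_of_continuousOn
    (f := fun x => (Af k v x, Sf v x))
    (((contAf k hv).prodMk (contSf hv)).continuousOn)
  refine ⟨C, le_trans (norm_nonneg _) (hC 0 (by norm_num)), fun x hx => ?_⟩
  have h := hC x hx
  constructor
  · calc |Af k v x| = ‖(Af k v x, Sf v x).1‖ := rfl
      _ ≤ ‖(Af k v x, Sf v x)‖ := norm_fst_le _
      _ ≤ C := h
  · calc |Sf v x| = ‖(Af k v x, Sf v x).2‖ := rfl
      _ ≤ ‖(Af k v x, Sf v x)‖ := norm_snd_le _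
      _ ≤ C := h

lemma Sf_nonneg {v : ℝ → E2} (x : ℝ) : 0 ≤ Sf v x := by
  simp only [Sf]; positivity

lemma Rf_bounds {v : ℝ → E2} {C t : ℝ} (hC0 : 0 ≤ C)
    (hbd : ∀ x ∈ Icc (0:ℝ) 1, |Af k v x| ≤ C ∧ |Sf v x| ≤ C)
    (ht : |t| ≤ 1/(4*C+4)) :
    ∀ x ∈ Icc (0:ℝ) 1, (1:ℝ)/2 ≤ 1 + t * Af k v x ∧ (1:ℝ)/2 ≤ Rf k v t x := by
  intro x hx
  obtain ⟨hA, hS⟩ := hbd x hx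
  have habs : |t * Af k v x| ≤ 1/4 := by
    rw [abs_mul]
    calc |t| * |Af k v x| ≤ (1/(4*C+4)) * C := by
          apply mul_le_mul ht hA (abs_nonneg _) (by positivity)
      _ ≤ 1/4 := by rw [div_mul_eq_mul_div]; rw [div_le_div_iff₀ (by positivity) (by norm_num)]; nlinarith
  have h2 := abs_le.1 habs
  constructor
  · linarith [h2.1]
  · have hSnn := Sf_nonneg (v := v) x
    have : 0 ≤ t^2 * Sf v x := by positivity
    simp only [Rf]
    nlinarith [h2.1]

-- Cauchy-Schwarz for interval integrals
lemma cs_interval {g : ℝ → ℝ} (hg : Continuous g) {a b : ℝ} (hab : a ≤ b) :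
    (∫ s in a..b, g s)^2 ≤ (b - a) * ∫ s in a..b, (g s)^2 := by
  rcases eq_or_lt_of_le hab with rfl | h
  · simp
  · set c := (∫ s in a..b, g s)/(b - a) with hc
    have hbne : b - a ≠ 0 := by linarith
    have h0 : (0:ℝ) ≤ ∫ s in a..b, (g s - c)^2 :=
      intervalIntegral.integral_nonneg hab (fun x _ => sq_nonneg _)
    have hig : IntervalIntegrable g volume a b := hg.intervalIntegrable a b
    have hig2 : IntervalIntegrable (fun s => (g s)^2) volume a b :=
      (hg.pow 2).intervalIntegrable a b
    have hexp : ∫ s in a..b, (g s - c)^2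
        = (∫ s in a..b, (g s)^2) - 2*c*(∫ s in a..b, g s) + c^2*(b-a) := by
      have h1 : ∀ s, (g s - c)^2 = (g s)^2 - (2*c)*g s + c^2 := fun s => by ring
      simp_rw [h1]
      rw [intervalIntegral.integral_add ((hig2.sub (hig.const_mul (2*c))))
        (intervalIntegrable_const), intervalIntegral.integral_sub hig2 (hig.const_mul (2*c)),
        intervalIntegral.integral_const_mul, intervalIntegral.integral_const]
      simp only [smul_eq_mul]
      ring
    have hcb : c * (b - a) = ∫ s in a..b, g s := by
      rw [hc]; field_simp
    nlinarith [h0, hexp, hcb, h, sq_nonneg c]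


lemma poincare {f g : ℝ → ℝ} (hf : ∀ x, HasDerivAt f (g x) x) (hg : Continuous g)
    (h0 : f 0 = 0) (h1 : f 1 = 0) :
    ∫ x in (0:ℝ)..1, (f x)^2 ≤ (1/8) * ∫ x in (0:ℝ)..1, (g x)^2 := by
  have hfc : Continuous f := by
    rw [continuous_iff_continuousAt]; exact fun x => (hf x).continuousAt
  have hgint : ∀ a b : ℝ, IntervalIntegrable g volume a b := fun a b =>
    hg.intervalIntegrable a b
  have hg2int : ∀ a b : ℝ, IntervalIntegrable (fun s => (g s)^2) volume a b := fun a b =>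
    (hg.pow 2).intervalIntegrable a b
  have hf2int : ∀ a b : ℝ, IntervalIntegrable (fun s => (f s)^2) volume a b := fun a b =>
    (hfc.pow 2).intervalIntegrable a b
  have hFTC : ∀ x : ℝ, f x = ∫ s in (0:ℝ)..x, g s := by
    intro x
    rw [intervalIntegral.integral_eq_sub_of_hasDerivAt (fun s _ => hf s) (hgint 0 x), h0,
      sub_zero]
  have hFTC2 : ∀ x : ℝ, f x = -∫ s in x..(1:ℝ), g s := by
    intro x
    rw [intervalIntegral.integral_eq_sub_of_hasDerivAt (fun s _ => hf s) (hgint x 1), h1]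
    ring
  set S1 := ∫ s in (0:ℝ)..(1/2:ℝ), (g s)^2 with hS1d
  set S2 := ∫ s in (1/2:ℝ)..(1:ℝ), (g s)^2 with hS2d
  have key1 : ∀ x ∈ Icc (0:ℝ) (1/2:ℝ), (f x)^2 ≤ x * S1 := by
    intro x hx
    have hcs := cs_interval hg hx.1
    have hmono : ∫ s in (0:ℝ)..x, (g s)^2 ≤ S1 := by
      rw [hS1d, ← intervalIntegral.integral_add_adjacent_intervals (hg2int 0 x)
        (hg2int x (1/2))]
      have : (0:ℝ) ≤ ∫ s in x..(1/2:ℝ), (g s)^2 :=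
        intervalIntegral.integral_nonneg hx.2 (fun s _ => sq_nonneg _)
      linarith
    calc (f x)^2 = (∫ s in (0:ℝ)..x, g s)^2 := by rw [hFTC x]
      _ ≤ (x - 0) * ∫ s in (0:ℝ)..x, (g s)^2 := hcs
      _ ≤ x * S1 := by rw [sub_zero]; exact mul_le_mul_of_nonneg_left hmono hx.1
  have key2 : ∀ x ∈ Icc (1/2:ℝ) 1, (f x)^2 ≤ (1-x) * S2 := by
    intro x hx
    have hcs := cs_interval hg hx.2
    have hmono : ∫ s in x..(1:ℝ), (g s)^2 ≤ S2 := by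
      rw [hS2d, ← intervalIntegral.integral_add_adjacent_intervals (hg2int (1/2) x)
        (hg2int x 1)]
      have : (0:ℝ) ≤ ∫ s in (1/2:ℝ)..x, (g s)^2 :=
        intervalIntegral.integral_nonneg hx.1 (fun s _ => sq_nonneg _)
      linarith
    calc (f x)^2 = (∫ s in x..(1:ℝ), g s)^2 := by rw [hFTC2 x]; ring
      _ ≤ (1 - x) * ∫ s in x..(1:ℝ), (g s)^2 := hcs
      _ ≤ (1-x) * S2 := mul_le_mul_of_nonneg_left hmono (by linarith [hx.2])
  have half1 : ∫ x in (0:ℝ)..(1/2:ℝ), (f x)^2 ≤ S1/8 := by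
    have hm := intervalIntegral.integral_mono_on (by norm_num : (0:ℝ) ≤ 1/2)
      (hf2int 0 (1/2)) ((by continuity : Continuous fun x:ℝ => x * S1).intervalIntegrable 0 (1/2)) key1
    have hval : ∫ x in (0:ℝ)..(1/2:ℝ), x * S1 = S1/8 := by
      rw [intervalIntegral.integral_mul_const, integral_id]
      ring
    linarith [hm, hval.le, hval.ge]
  have half2 : ∫ x in (1/2:ℝ)..1, (f x)^2 ≤ S2/8 := by
    have hm := intervalIntegral.integral_mono_on (by norm_num : (1/2:ℝ) ≤ 1)
      (hf2int (1/2) 1) ((by continuity : Continuous fun x:ℝ => (1-x) * S2).intervalIntegrable (1/2) 1) key2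
    have hval : ∫ x in (1/2:ℝ)..1, (1-x) * S2 = S2/8 := by
      rw [intervalIntegral.integral_mul_const]
      have : ∫ x in (1/2:ℝ)..1, (1-x) = 1/8 := by
        have hs := intervalIntegral.integral_sub (μ := volume) (a := (1/2:ℝ)) (b := 1)
          (f := fun _ => (1:ℝ)) (g := fun x => x) intervalIntegrable_const
          (continuous_id.intervalIntegrable _ _)
        rw [hs, integral_id, intervalIntegral.integral_const]
        norm_num
      rw [this]
      ring
    linarith [hm, hval.le]
  have hsplit : ∫ x in (0:ℝ)..1, (f x)^2
      = (∫ x in (0:ℝ)..(1/2:ℝ), (f x)^2) + ∫ x in (1/2:ℝ)..1, (f x)^2 :=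
    (intervalIntegral.integral_add_adjacent_intervals (hf2int 0 (1/2)) (hf2int (1/2) 1)).symm
  have hsplitg : ∫ x in (0:ℝ)..1, (g x)^2 = S1 + S2 :=
    (intervalIntegral.integral_add_adjacent_intervals (hg2int 0 (1/2)) (hg2int (1/2) 1)).symm
  rw [hsplit, hsplitg]
  linarith

def DKf (t x : ℝ) : ℝ :=
  (2*(B0 k v x + t*B1 k v x)*B1 k v x*(Rf k v t x)^2
    - (B0 k v x + t*B1 k v x)^2*(2*Rf k v t x*(2*Af k v x + 2*t*Sf v x)))
  / ((Rf k v t x)^2)^2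

lemma hasDerivAt_Rf_t (x t : ℝ) :
    HasDerivAt (fun τ => Rf k v τ x) (2*Af k v x + 2*t*Sf v x) t := by
  have h1 : HasDerivAt (fun τ : ℝ => 2*τ*Af k v x) (2*Af k v x) t := by
    simpa using (hasDerivAt_id t).const_mul 2 |>.mul_const (Af k v x)
  have h2 : HasDerivAt (fun τ : ℝ => τ^2*Sf v x) (2*t*Sf v x) t := by
    simpa using (hasDerivAt_pow 2 t).mul_const (Sf v x)
  simpa [Pi.add_def, Rf] using ((hasDerivAt_const t (1:ℝ)).add h1).add h2

lemma hasDerivAt_N_t (x t : ℝ) :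
    HasDerivAt (fun τ => B0 k v x + τ*B1 k v x) (B1 k v x) t := by
  simpa [Pi.add_def] using (hasDerivAt_const t (B0 k v x)).add ((hasDerivAt_id t).mul_const (B1 k v x))

lemma hasDerivAt_Kf_t {v : ℝ → E2} (x t : ℝ) (hne : Rf k v t x ≠ 0) :
    HasDerivAt (fun τ => Kf k v τ x) (DKf k v t x) t := by
  have hN := (hasDerivAt_N_t k v x t).pow 2
  have hR := (hasDerivAt_Rf_t k v x t).pow 2
  have hdiv := hN.div hR (pow_ne_zero 2 hne)
  refine hdiv.congr_deriv (Eq.symm ?_)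
  simp only [DKf, Pi.pow_apply]
  ring_nf

lemma hasDerivAt_F_t {v : ℝ → E2} (x t : ℝ) (hne : Rf k v t x ≠ 0) :
    HasDerivAt (fun τ => τ^2 * Kf k v τ x) (2*t*Kf k v t x + t^2*DKf k v t x) t := by
  have := (hasDerivAt_pow 2 t).mul (hasDerivAt_Kf_t k (v := v) x t hne)
  refine this.congr_deriv (Eq.symm ?_)
  ring

lemma contKf_num {v : ℝ → E2} (hv : ContDiff ℝ (⊤ : ℕ∞) v) :
    Continuous (fun p : ℝ×ℝ => (B0 k v p.2 + p.1*B1 k v p.2)) :=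
  ((contB0 k hv).comp continuous_snd).add
    (continuous_fst.mul ((contB1 k hv).comp continuous_snd))

lemma contKf_on {v : ℝ → E2} (hv : ContDiff ℝ (⊤ : ℕ∞) v) {s : Set (ℝ×ℝ)}
    (hRf : ∀ p ∈ s, Rf k v p.1 p.2 ≠ 0) :
    ContinuousOn (fun p : ℝ×ℝ => Kf k v p.1 p.2) s := by
  apply ContinuousOn.div
  · exact ((contKf_num k hv).pow 2).continuousOn
  · exact ((contRf2 k hv).pow 2).continuousOn
  · exact fun p hp => pow_ne_zero 2 (hRf p hp)

lemma contDKf_on {v : ℝ → E2} (hv : ContDiff ℝ (⊤ : ℕ∞) v) {s : Set (ℝ×ℝ)}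
    (hRf : ∀ p ∈ s, Rf k v p.1 p.2 ≠ 0) :
    ContinuousOn (fun p : ℝ×ℝ => DKf k v p.1 p.2) s := by
  apply ContinuousOn.div
  · apply Continuous.continuousOn
    have c1 : Continuous (fun p : ℝ×ℝ => 2*(B0 k v p.2 + p.1*B1 k v p.2)*B1 k v p.2
        *(Rf k v p.1 p.2)^2) :=
      ((continuous_const.mul (contKf_num k hv)).mul
        ((contB1 k hv).comp continuous_snd)).mul ((contRf2 k hv).pow 2)
    have c2 : Continuous (fun p : ℝ×ℝ => (B0 k v p.2 + p.1*B1 k v p.2)^2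
        *(2*Rf k v p.1 p.2*(2*Af k v p.2 + 2*p.1*Sf v p.2))) :=
      ((contKf_num k hv).pow 2).mul ((continuous_const.mul (contRf2 k hv)).mul
        (((continuous_const.mul ((contAf k hv).comp continuous_snd))).add
          ((continuous_const.mul continuous_fst).mul ((contSf hv).comp continuous_snd))))
    exact c1.sub c2
  · exact (((contRf2 k hv).pow 2).pow 2).continuousOn
  · exact fun p hp => pow_ne_zero 2 (pow_ne_zero 2 (hRf p hp))

lemma boundM {v : ℝ → E2} (hv : ContDiff ℝ (⊤ : ℕ∞) v) {t1 : ℝ} (ht1 : 0 ≤ t1)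
    (hRf : ∀ t ∈ Icc (-t1) t1, ∀ x ∈ Icc (0:ℝ) 1, Rf k v t x ≠ 0) :
    ∃ M : ℝ, 0 ≤ M ∧ ∀ t ∈ Icc (-t1) t1, ∀ x ∈ Icc (0:ℝ) 1,
      |Kf k v t x| ≤ M ∧ |DKf k v t x| ≤ M := by
  set s : Set (ℝ × ℝ) := Icc (-t1) t1 ×ˢ Icc (0:ℝ) 1 with hs
  have hscomp : IsCompact s := isCompact_Icc.prod isCompact_Icc
  have hRf' : ∀ p ∈ s, Rf k v p.1 p.2 ≠ 0 := fun p hp => hRf p.1 hp.1 p.2 hp.2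
  have hcont : ContinuousOn (fun p : ℝ×ℝ => (Kf k v p.1 p.2, DKf k v p.1 p.2)) s :=
    (contKf_on k hv hRf').prodMk (contDKf_on k hv hRf')
  obtain ⟨M, hM⟩ := hscomp.exists_bound_of_continuousOn hcont
  have h00 : ((0:ℝ), (0:ℝ)) ∈ s := by
    constructor
    · exact ⟨neg_nonpos.2 ht1, ht1⟩
    · norm_num
  refine ⟨M, le_trans (norm_nonneg _) (hM _ h00), fun t ht x hx => ?_⟩
  have h := hM (t, x) ⟨ht, hx⟩
  constructor
  · have h2 := (norm_fst_le (Kf k v t x, DKf k v t x)).trans h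
    simpa using h2
  · have h2 := (norm_snd_le (Kf k v t x, DKf k v t x)).trans h
    simpa using h2

lemma Kf_zero {v : ℝ → E2} (x : ℝ) : Kf k v 0 x = B0 k v x ^ 2 := by
  simp [Kf, Rf]

lemma contKfx {v : ℝ → E2} (hv : ContDiff ℝ (⊤ : ℕ∞) v) (t : ℝ)
    (hRne : ∀ x ∈ Icc (0:ℝ) 1, Rf k v t x ≠ 0) :
    ContinuousOn (fun x => Kf k v t x) (Icc (0:ℝ) 1) := by
  apply ContinuousOn.div
  · exact (((contB0 k hv).add (continuous_const.mul (contB1 k hv))).pow 2).continuousOn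
  · exact ((contRfx k hv t).pow 2).continuousOn
  · exact fun x hx => pow_ne_zero 2 (hRne x hx)

lemma contDKfx {v : ℝ → E2} (hv : ContDiff ℝ (⊤ : ℕ∞) v) (t : ℝ)
    (hRne : ∀ x ∈ Icc (0:ℝ) 1, Rf k v t x ≠ 0) :
    ContinuousOn (fun x => DKf k v t x) (Icc (0:ℝ) 1) := by
  have cn : Continuous (fun x => B0 k v x + t*B1 k v x) :=
    (contB0 k hv).add (continuous_const.mul (contB1 k hv))
  apply ContinuousOn.div
  · refine Continuous.continuousOn (Continuous.sub ?_ ?_)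
    · exact ((continuous_const.mul cn).mul (contB1 k hv)).mul ((contRfx k hv t).pow 2)
    · exact (cn.pow 2).mul ((continuous_const.mul (contRfx k hv t)).mul
        ((continuous_const.mul (contAf k hv)).add (continuous_const.mul (contSf hv))))
  · exact (((contRfx k hv t).pow 2).pow 2).continuousOn
  · exact fun x hx => pow_ne_zero 2 (pow_ne_zero 2 (hRne x hx))

lemma gpert_repr {v : ℝ → E2} (hv : ContDiff ℝ (⊤ : ℕ∞) v) (hsupp : tsupport v ⊆ Ioo (0:ℝ) 1)
    {t : ℝ} (hpos : ∀ x ∈ Icc (0:ℝ) 1, (1:ℝ)/2 ≤ 1 + t * Af k v x ∧ (1:ℝ)/2 ≤ Rf k v t x) :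
    gpert k v t = th k^2 + ∫ x in (0:ℝ)..1, t^2 * Kf k v t x := by
  have huIcc : uIcc (0:ℝ) 1 = Icc (0:ℝ) 1 := uIcc_of_le (by norm_num)
  have hRne : ∀ x ∈ Icc (0:ℝ) 1, Rf k v t x ≠ 0 := fun x hx => by linarith [(hpos x hx).2]
  have hcongr : EqOn
      (fun x => ‖deriv (fun y => ‖nk k y + t • v y‖⁻¹ • (nk k y + t • v y)) x‖^2)
      (fun x => th k^2 + (2*th k*(t*(B0 k v x + t*B1 k v x))/Rf k v t x + t^2*Kf k v t x))
      (uIcc (0:ℝ) 1) := by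
    intro x hx
    rw [huIcc] at hx
    have hL := L1 k hv t x (lt_of_lt_of_le (by norm_num) (hpos x hx).2)
    simp only
    rw [hL]; ring
  have hmidc : ContinuousOn (fun x => 2*th k*(t*(B0 k v x + t*B1 k v x))/Rf k v t x)
      (uIcc (0:ℝ) 1) := by
    rw [huIcc]
    exact ContinuousOn.div
      ((continuous_const.mul (continuous_const.mul
        ((contB0 k hv).add (continuous_const.mul (contB1 k hv))))).continuousOn)
      ((contRfx k hv t).continuousOn) hRne
  have hKfc : ContinuousOn (fun x => t^2 * Kf k v t x) (uIcc (0:ℝ) 1) := by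
    rw [huIcc]
    exact continuousOn_const.mul (contKfx k hv t hRne)
  have hmid_int : IntervalIntegrable
      (fun x => 2*th k*(t*(B0 k v x + t*B1 k v x))/Rf k v t x) volume 0 1 :=
    hmidc.intervalIntegrable
  have hKf_int : IntervalIntegrable (fun x => t^2 * Kf k v t x) volume 0 1 :=
    hKfc.intervalIntegrable
  have step1 : gpert k v t
      = ∫ x in (0:ℝ)..1, (th k^2 + (2*th k*(t*(B0 k v x + t*B1 k v x))/Rf k v t x
          + t^2*Kf k v t x)) := by
    rw [gpert, dirichlet]
    exact intervalIntegral.integral_congr hcongr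
  rw [step1]
  rw [intervalIntegral.integral_add intervalIntegrable_const (hmid_int.add hKf_int),
    intervalIntegral.integral_add hmid_int hKf_int, intervalIntegral.integral_const]
  have hmid0 : ∫ x in (0:ℝ)..1, 2*th k*(t*(B0 k v x + t*B1 k v x))/Rf k v t x = 0 := by
    have : (fun x => 2*th k*(t*(B0 k v x + t*B1 k v x))/Rf k v t x)
        = fun x => (2*th k) * (t*(B0 k v x + t*B1 k v x)/Rf k v t x) := by
      funext x; ring
    rw [this, intervalIntegral.integral_const_mul,
      int_middle_zero k hv hsupp t (fun x hx => by linarith [(hpos x hx).1]), mul_zero]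
  rw [hmid0]
  simp

set_option maxHeartbeats 2000000 in
lemma deriv2_gpert {v : ℝ → E2} (hsm : ContDiff ℝ (⊤ : ℕ∞) v) (hsupp : tsupport v ⊆ Ioo (0:ℝ) 1) :
    deriv (deriv (gpert k v)) 0 = 2 * ∫ x in (0:ℝ)..1, (B0 k v x)^2 := by
  obtain ⟨C, hC0, hbd⟩ := exists_boundAS k hsm
  set t1 : ℝ := 1/(4*C+4) with ht1d
  have ht1pos : 0 < t1 := by positivity
  have ht1le : t1 ≤ 1/4 := by
    rw [ht1d]
    rw [div_le_div_iff₀ (by positivity) (by norm_num)]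
    linarith
  have hposs : ∀ t : ℝ, |t| ≤ t1 → ∀ x ∈ Icc (0:ℝ) 1,
      (1:ℝ)/2 ≤ 1 + t*Af k v x ∧ (1:ℝ)/2 ≤ Rf k v t x := fun t ht =>
    Rf_bounds k hC0 hbd ht
  have hRfne : ∀ t ∈ Icc (-t1) t1, ∀ x ∈ Icc (0:ℝ) 1, Rf k v t x ≠ 0 := by
    intro t ht x hx
    have := (hposs t (abs_le.2 ht) x hx).2; linarith
  obtain ⟨M, hM0, hM⟩ := boundM k hsm ht1pos.le hRfne
  have hIsub : Ι (0:ℝ) 1 ⊆ Icc (0:ℝ) 1 := by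
    rw [uIoc_of_le (by norm_num)]; exact Ioc_subset_Icc_self
  have huIcc : uIcc (0:ℝ) 1 = Icc (0:ℝ) 1 := uIcc_of_le (by norm_num)
  have hrepr : ∀ t ∈ Metric.ball (0:ℝ) t1,
      gpert k v t = th k^2 + ∫ x in (0:ℝ)..1, t^2 * Kf k v t x := by
    intro t ht
    rw [Metric.mem_ball, dist_zero_right, Real.norm_eq_abs] at ht
    exact gpert_repr k hsm hsupp (hposs t ht.le)
  -- derivative of gpert on the ball
  have hQder : ∀ t0 ∈ Metric.ball (0:ℝ) t1,
      HasDerivAt (gpert k v)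
        (∫ x in (0:ℝ)..1, (2*t0*Kf k v t0 x + t0^2*DKf k v t0 x)) t0 := by
    intro t0 ht0'
    have ht0 : |t0| < t1 := by
      rwa [Metric.mem_ball, dist_zero_right, Real.norm_eq_abs] at ht0'
    set ε := t1 - |t0| with hεd
    have hε : 0 < ε := by rw [hεd]; linarith
    have hball : ∀ τ ∈ Metric.ball t0 ε, |τ| ≤ t1 := by
      intro τ hτ
      rw [Metric.mem_ball, Real.dist_eq] at hτ
      have := abs_sub_abs_le_abs_sub τ t0
      rw [hεd] at hτ
      linarith
    have hmem : ∀ τ, |τ| ≤ t1 → τ ∈ Icc (-t1) t1 := fun τ h => abs_le.1 h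
    have hdom := intervalIntegral.hasDerivAt_integral_of_dominated_loc_of_deriv_le
      (F := fun τ x => τ^2 * Kf k v τ x)
      (F' := fun τ x => 2*τ*Kf k v τ x + τ^2*DKf k v τ x)
      (bound := fun _ => 3*M) (μ := volume) (a := (0:ℝ)) (b := 1) (x₀ := t0) (Metric.ball_mem_nhds t0 hε)
      ?_ ?_ ?_ ?_ ?_ ?_
    · have hg : HasDerivAt (fun t => th k^2 + ∫ x in (0:ℝ)..1, t^2 * Kf k v t x)
          (∫ x in (0:ℝ)..1, (2*t0*Kf k v t0 x + t0^2*DKf k v t0 x)) t0 :=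
        hdom.2.const_add (th k^2)
      refine hg.congr_of_eventuallyEq ?_
      have : Metric.ball (0:ℝ) t1 ∈ 𝓝 t0 := by
        apply Metric.isOpen_ball.mem_nhds
        rwa [Metric.mem_ball, dist_zero_right, Real.norm_eq_abs]
      exact Filter.eventuallyEq_of_mem this hrepr
    · -- measurability of F τ
      have : Metric.ball t0 ε ∈ 𝓝 t0 := Metric.isOpen_ball.mem_nhds (by simp [hε])
      filter_upwards [this] with τ hτ
      have hc : ContinuousOn (fun x => τ^2 * Kf k v τ x) (Icc (0:ℝ) 1) :=
        continuousOn_const.mul (contKfx k hsm τ (hRfne τ (hmem τ (hball τ hτ))))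
      exact (hc.mono hIsub).aestronglyMeasurable measurableSet_uIoc
    · -- integrability of F t0
      apply ContinuousOn.intervalIntegrable
      rw [huIcc]
      exact continuousOn_const.mul (contKfx k hsm t0 (hRfne t0 (hmem t0 ht0.le)))
    · -- measurability of F' t0
      have hc : ContinuousOn (fun x => 2*t0*Kf k v t0 x + t0^2*DKf k v t0 x)
          (Icc (0:ℝ) 1) :=
        (continuousOn_const.mul (contKfx k hsm t0 (hRfne t0 (hmem t0 ht0.le)))).add
          (continuousOn_const.mul (contDKfx k hsm t0 (hRfne t0 (hmem t0 ht0.le))))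
      exact (hc.mono hIsub).aestronglyMeasurable measurableSet_uIoc
    · -- bound
      apply Filter.Eventually.of_forall
      intro x hx τ hτ
      have hxI := hIsub hx
      have hτ1 := hball τ hτ
      obtain ⟨hK, hDK⟩ := hM τ (hmem τ hτ1) x hxI
      have hτ4 : |τ| ≤ 1/4 := le_trans hτ1 ht1le
      rw [Real.norm_eq_abs]
      calc |2*τ*Kf k v τ x + τ^2*DKf k v τ x|
          ≤ |2*τ*Kf k v τ x| + |τ^2*DKf k v τ x| := abs_add_le _ _
        _ ≤ 2*M + M := by
            have h1 : |2*τ*Kf k v τ x| ≤ 2*M := by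
              rw [abs_mul, abs_mul, abs_two]
              have hτle : |τ| ≤ 1 := le_trans hτ4 (by norm_num)
              nlinarith [abs_nonneg (Kf k v τ x), abs_nonneg τ, hK]
            have h2 : |τ^2*DKf k v τ x| ≤ M := by
              rw [abs_mul, abs_pow]
              have h3 : |τ|^2 ≤ 1 := by nlinarith [abs_nonneg τ]
              nlinarith [abs_nonneg (DKf k v τ x), hDK]
            linarith
        _ ≤ 3*M := by linarith
    · exact intervalIntegrable_const
    · -- differentiability in τ
      apply Filter.Eventually.of_forall
      intro x hx τ hτ
      exact hasDerivAt_F_t k (v := v) x τ (hRfne τ (hmem τ (hball τ hτ)) x (hIsub hx))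
  -- value of deriv gpert on the ball and the second derivative
  have hKint : ∀ t ∈ Icc (-t1) t1, IntervalIntegrable (fun x => Kf k v t x) volume 0 1 := by
    intro t ht
    apply ContinuousOn.intervalIntegrable
    rw [huIcc]; exact contKfx k hsm t (hRfne t ht)
  have hDKint : ∀ t ∈ Icc (-t1) t1, IntervalIntegrable (fun x => DKf k v t x) volume 0 1 := by
    intro t ht
    apply ContinuousOn.intervalIntegrable
    rw [huIcc]; exact contDKfx k hsm t (hRfne t ht)
  have hφ : ∀ t ∈ Metric.ball (0:ℝ) t1, deriv (gpert k v) t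
      = ∫ x in (0:ℝ)..1, (2*t*Kf k v t x + t^2*DKf k v t x) := fun t ht => (hQder t ht).deriv
  have h0ball : (0:ℝ) ∈ Metric.ball (0:ℝ) t1 := by simp [ht1pos]
  have h0m : (0:ℝ) ∈ Icc (-t1) t1 := by constructor <;> linarith
  have hd0 : deriv (gpert k v) 0 = 0 := by
    rw [hφ 0 h0ball]
    norm_num
  set L : ℝ := 2 * ∫ x in (0:ℝ)..1, Kf k v 0 x with hLd
  have hKlip : ∀ x ∈ Icc (0:ℝ) 1, ∀ t ∈ Icc (-t1) t1,
      |Kf k v t x - Kf k v 0 x| ≤ M * |t| := by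
    intro x hx t ht
    have hmvt := Convex.norm_image_sub_le_of_norm_hasDerivWithin_le
      (f := fun τ => Kf k v τ x) (f' := fun τ => DKf k v τ x) (s := Icc (-t1) t1)
      (fun τ hτ => (hasDerivAt_Kf_t k (v := v) x τ (hRfne τ hτ x hx)).hasDerivWithinAt)
      (fun τ hτ => by rw [Real.norm_eq_abs]; exact (hM τ hτ x hx).2)
      (convex_Icc _ _) h0m ht
    simpa [Real.norm_eq_abs] using hmvt
  have hLder : HasDerivAt (deriv (gpert k v)) L 0 := by
    rw [hasDerivAt_iff_tendsto_slope]
    have hev : ∀ᶠ t in 𝓝[≠] (0:ℝ), ‖slope (deriv (gpert k v)) 0 t - L‖ ≤ 3*M*|t| := by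
      have hball' : Metric.ball (0:ℝ) t1 ∈ 𝓝[≠] (0:ℝ) :=
        nhdsWithin_le_nhds (Metric.isOpen_ball.mem_nhds h0ball)
      filter_upwards [hball', self_mem_nhdsWithin] with t htb htne
      rw [Set.mem_compl_singleton_iff] at htne
      have htt1 : |t| < t1 := by
        rwa [Metric.mem_ball, dist_zero_right, Real.norm_eq_abs] at htb
      have htm : t ∈ Icc (-t1) t1 := abs_le.1 htt1.le
      have hslope : slope (deriv (gpert k v)) 0 t
          = ∫ x in (0:ℝ)..1, (2*Kf k v t x + t*DKf k v t x) := by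
        rw [slope_def_field, hd0, sub_zero, sub_zero, hφ t htb]
        have hfac : (fun x => 2*t*Kf k v t x + t^2*DKf k v t x)
            = fun x => t * (2*Kf k v t x + t*DKf k v t x) := by funext x; ring
        rw [hfac, intervalIntegral.integral_const_mul]
        exact mul_div_cancel_left₀ _ htne
      rw [hslope, hLd]
      have hconv : (2:ℝ) * ∫ x in (0:ℝ)..1, Kf k v 0 x
          = ∫ x in (0:ℝ)..1, 2 * Kf k v 0 x :=
        (intervalIntegral.integral_const_mul 2 _).symm
      rw [hconv, ← intervalIntegral.integral_sub
        (((hKint t htm).const_mul 2).add ((hDKint t htm).const_mul t))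
        ((hKint 0 h0m).const_mul 2)]
      have hb : ∀ x ∈ Ι (0:ℝ) 1,
          ‖2*Kf k v t x + t*DKf k v t x - 2*Kf k v 0 x‖ ≤ 3*M*|t| := by
        intro x hxI
        have hx := hIsub hxI
        have h1 := hKlip x hx t htm
        have h2 := (hM t htm x hx).2
        rw [Real.norm_eq_abs]
        have hre : 2*Kf k v t x + t*DKf k v t x - 2*Kf k v 0 x
            = 2*(Kf k v t x - Kf k v 0 x) + t*DKf k v t x := by ring
        rw [hre]
        have e1 : |2*(Kf k v t x - Kf k v 0 x)| ≤ 2*(M*|t|) := by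
          rw [abs_mul, abs_two]
          exact mul_le_mul_of_nonneg_left h1 (by norm_num)
        have e2 : |t*DKf k v t x| ≤ |t| * M := by
          rw [abs_mul]
          exact mul_le_mul_of_nonneg_left h2 (abs_nonneg t)
        calc |2*(Kf k v t x - Kf k v 0 x) + t*DKf k v t x|
            ≤ |2*(Kf k v t x - Kf k v 0 x)| + |t*DKf k v t x| := abs_add_le _ _
          _ ≤ 2*(M*|t|) + |t| * M := by linarith
          _ = 3*M*|t| := by ring
      have hni := intervalIntegral.norm_integral_le_of_norm_le_const hb
      simpa using hni
    have h3 : Tendsto (fun t:ℝ => 3*M*|t|) (𝓝[≠] (0:ℝ)) (𝓝 0) := by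
      have hc : Continuous (fun t:ℝ => 3*M*|t|) := by continuity
      have h4 := hc.tendsto 0
      norm_num at h4
      exact h4.mono_left nhdsWithin_le_nhds
    have hsq := squeeze_zero_norm' hev h3
    exact tendsto_sub_nhds_zero_iff.mp hsq
  have hKf0 : ∫ x in (0:ℝ)..1, Kf k v 0 x = ∫ x in (0:ℝ)..1, (B0 k v x)^2 := by
    apply intervalIntegral.integral_congr
    intro x _
    exact Kf_zero k (v := v) x
  rw [hLder.deriv, hLd, hKf0]

end SV

/-- **Second variation of the Dirichlet energy at `n_k` (formula and coercivity).**
For every test function `v`, `(d²/dt²)|₀ I(w_t) = 2∫₀¹ |(w')'|² − 4k²π²|w'|² dx`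
and this is `≥ π² ∫₀¹ |w'|² dx`; moreover there is a uniform `γ > 0` with
`(d²/dt²)|₀ I(w_t) ≥ γ ‖w'‖²_{W^{1,2}}` for all such `v`. -/
theorem nk_second_variation (k : ℤ) :
    (∀ v : ℝ → E2, TestV v →
      deriv (deriv (gpert k v)) 0 =
        2 * ∫ x in (0 : ℝ)..1,
          (‖deriv (wprime k v) x‖ ^ 2 - 4 * (k : ℝ) ^ 2 * π ^ 2 * ‖wprime k v x‖ ^ 2) ∧
      π ^ 2 * ∫ x in (0 : ℝ)..1, ‖wprime k v x‖ ^ 2 ≤ deriv (deriv (gpert k v)) 0) ∧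
    ∃ γ > (0 : ℝ), ∀ v : ℝ → E2, TestV v →
      γ * ∫ x in (0 : ℝ)..1, (‖wprime k v x‖ ^ 2 + ‖deriv (wprime k v) x‖ ^ 2) ≤
        deriv (deriv (gpert k v)) 0 := by
  classical
  have main : ∀ v : ℝ → E2, TestV v →
      deriv (deriv (gpert k v)) 0 = 2 * ∫ x in (0:ℝ)..1, (SV.B0 k v x)^2 ∧
      (∫ x in (0:ℝ)..1, (‖deriv (wprime k v) x‖ ^ 2
          - 4 * (k : ℝ) ^ 2 * π ^ 2 * ‖wprime k v x‖ ^ 2))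
        = ∫ x in (0:ℝ)..1, (SV.B0 k v x)^2 ∧
      (∫ x in (0:ℝ)..1, ‖wprime k v x‖ ^ 2) = ∫ x in (0:ℝ)..1, (SV.Bf k v x)^2 ∧
      (∫ x in (0:ℝ)..1, (‖wprime k v x‖ ^ 2 + ‖deriv (wprime k v) x‖ ^ 2))
        = (∫ x in (0:ℝ)..1, (SV.Bf k v x)^2)
          + ((∫ x in (0:ℝ)..1, (SV.B0 k v x)^2)
            + (4*(k:ℝ)^2*π^2) * ∫ x in (0:ℝ)..1, (SV.Bf k v x)^2) ∧
      (∫ x in (0:ℝ)..1, (SV.Bf k v x)^2) ≤ (1/8) * ∫ x in (0:ℝ)..1, (SV.B0 k v x)^2 ∧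
      0 ≤ (∫ x in (0:ℝ)..1, (SV.B0 k v x)^2) ∧
      0 ≤ ∫ x in (0:ℝ)..1, (SV.Bf k v x)^2 := by
    intro v hv
    obtain ⟨hsm, hsupp⟩ := hv
    have hth : SV.th k ^ 2 = 4*(k:ℝ)^2*π^2 := by
      simp only [SV.th]; ring
    have hBfint : IntervalIntegrable (fun x => (SV.Bf k v x)^2) volume 0 1 :=
      (((SV.contBf k hsm).pow 2)).intervalIntegrable 0 1
    have hB0int : IntervalIntegrable (fun x => (SV.B0 k v x)^2) volume 0 1 :=
      (((SV.contB0 k hsm).pow 2)).intervalIntegrable 0 1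
    refine ⟨SV.deriv2_gpert k hsm hsupp, ?_, ?_, ?_, ?_, ?_, ?_⟩
    · apply intervalIntegral.integral_congr
      intro x _
      simp only
      rw [SV.norm_deriv_wprime_sq k hsm x, SV.norm_wprime_sq k x, hth]
      ring
    · apply intervalIntegral.integral_congr
      intro x _
      exact SV.norm_wprime_sq k x
    · have hcongr : (∫ x in (0:ℝ)..1, (‖wprime k v x‖ ^ 2 + ‖deriv (wprime k v) x‖ ^ 2))
          = ∫ x in (0:ℝ)..1, ((SV.Bf k v x)^2 + ((SV.B0 k v x)^2
              + (4*(k:ℝ)^2*π^2) * (SV.Bf k v x)^2)) := by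
        apply intervalIntegral.integral_congr
        intro x _
        simp only
        rw [SV.norm_deriv_wprime_sq k hsm x, SV.norm_wprime_sq k x, hth]
      rw [hcongr]
      rw [intervalIntegral.integral_add hBfint (hB0int.add (hBfint.const_mul _)),
        intervalIntegral.integral_add hB0int (hBfint.const_mul _),
        intervalIntegral.integral_const_mul]
    · have hv0 : v 0 = 0 := SV.v_zero_at hsupp (by simp)
      have hv1 : v 1 = 0 := SV.v_zero_at hsupp (by simp)
      have hBf0 : SV.Bf k v 0 = 0 := by simp [SV.Bf, SV.V0, SV.V1, hv0]
      have hBf1 : SV.Bf k v 1 = 0 := by simp [SV.Bf, SV.V0, SV.V1, hv1]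
      exact SV.poincare (SV.hasDerivAt_Bf k hsm) (SV.contB0 k hsm) hBf0 hBf1
    · exact intervalIntegral.integral_nonneg (by norm_num) (fun x _ => sq_nonneg _)
    · exact intervalIntegral.integral_nonneg (by norm_num) (fun x _ => sq_nonneg _)
  have hpi2 : π^2 ≤ 16 := by nlinarith [Real.pi_le_four, Real.pi_pos]
  constructor
  · intro v hv
    obtain ⟨hD, hEq1, hEq2, _, hPoin, hI1, hI2⟩ := main v hv
    constructor
    · rw [hD, hEq1]
    · rw [hD, hEq2]
      nlinarith [hPoin, hI1, hI2, hpi2, Real.pi_pos]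
  · set θ2 : ℝ := 4*(k:ℝ)^2*π^2 with hθ2d
    have hθ2 : 0 ≤ θ2 := by positivity
    refine ⟨16/(9 + θ2), by positivity, ?_⟩
    intro v hv
    obtain ⟨hD, _, _, hEq3, hPoin, hI1, hI2⟩ := main v hv
    rw [hD, hEq3]
    set γ : ℝ := 16/(9 + θ2) with hγd
    set I1 := ∫ x in (0:ℝ)..1, (SV.B0 k v x)^2
    set I2 := ∫ x in (0:ℝ)..1, (SV.Bf k v x)^2
    have hγpos : 0 < γ := by positivity
    have key : γ * (9 + θ2) = 16 := by
      rw [hγd]; field_simp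
    have key2 : γ * (9 + θ2) * I1 = 16 * I1 := by rw [key]
    have hc : 0 ≤ γ*(1+θ2) := by positivity
    have h9 : γ*(1+θ2)*I2 ≤ γ*(1+θ2)*((1/8)*I1) := mul_le_mul_of_nonneg_left hPoin hc
    nlinarith [h9, key2, hI1]


end
end

section
/- Consider the Dirichlet energy I(n) = ∫₀¹ |n'(x)|² dx over 𝒜 = {n ∈ W^{1,2}((0,1), S¹) : n(0) = n(1) = e₁}. For every k ∈ ℤ the map n_k(x) = (cos(2kπx), sin(2kπx)) is a strict strong local minimizer of I; in particular, I has countably many strong local minimizers (with I(n_k) = 4k²π²), of which only n_0 ≡ e₁ is the global minimizer. -/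
open Set MeasureTheory Real RealInnerProductSpace

noncomputable section

def toC (v : E2) : ℂ := ⟨v 0, v 1⟩
lemma toC_abs (v : E2) : ‖toC v‖ = ‖v‖ := by
  rw [EuclideanSpace.norm_eq, Complex.norm_def, Complex.normSq_mk]
  simp only [toC, Fin.sum_univ_two, Real.norm_eq_abs, sq_abs, pow_two, abs_mul_abs_self]
lemma toC_sub (v w : E2) : toC (v - w) = toC v - toC w := by
  simp [toC, Complex.ext_iff, PiLp.sub_apply]
lemma toC_inj {v w : E2} (h : toC v = toC w) : v = w := by
  rw [Complex.ext_iff] at h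
  ext i; fin_cases i
  · exact h.1
  · exact h.2
lemma toC_nk (k : ℤ) (x : ℝ) : toC (nk k x) = Complex.exp ((2 * k * π * x : ℝ) * Complex.I) := by
  rw [Complex.ext_iff, Complex.exp_ofReal_mul_I_re, Complex.exp_ofReal_mul_I_im]
  constructor <;> rfl
lemma toC_e1 : toC e1 = 1 := by
  rw [Complex.ext_iff]; constructor <;> rfl
lemma toC_eq (v : E2) : toC v = (v 0 : ℂ) + (v 1 : ℂ) * Complex.I := by
  unfold toC; rw [Complex.mk_eq_add_mul_I]

lemma continuous_toC : Continuous toC := by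
  have h0 : Continuous (fun v : E2 => v 0) :=
    (continuous_apply (0 : Fin 2)).comp (PiLp.continuousLinearEquiv 2 ℝ (fun _ : Fin 2 => ℝ)).continuous
  have h1 : Continuous (fun v : E2 => v 1) :=
    (continuous_apply (1 : Fin 2)).comp (PiLp.continuousLinearEquiv 2 ℝ (fun _ : Fin 2 => ℝ)).continuous
  have : (toC : E2 → ℂ) = fun v => (v 0 : ℂ) + (v 1 : ℂ) * Complex.I := funext toC_eq
  rw [this]
  exact (Complex.continuous_ofReal.comp h0).add
    ((Complex.continuous_ofReal.comp h1).mul continuous_const)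

lemma lift_exists (k : ℤ) (m : ℝ → E2) (hm : Adm1 m)
    (hclose : ∀ x ∈ Icc (0:ℝ) 1, ‖m x - nk k x‖ < 1) :
    ∃ φ : ℝ → ℝ, ContinuousOn φ (Icc 0 1) ∧ φ 0 = 0 ∧ φ 1 = 2*k*π ∧
      (∀ x ∈ Icc (0:ℝ) 1, toC (m x) = Complex.exp ((φ x : ℝ) * Complex.I)) ∧
      (∀ x ∈ Icc (0:ℝ) 1, m x ≠ nk k x → φ x ≠ 2*k*π*x) := by
  obtain ⟨hcont, hint, hrep, hnorm, h0, h1⟩ := hm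
  set ceinv : ℝ → ℂ := fun x => Complex.exp ((-(2*k*π*x) : ℝ) * Complex.I) with hceinv
  set w : ℝ → ℂ := fun x => toC (m x) * ceinv x with hwdef
  have hmul1 : ∀ x : ℝ, toC (nk k x) * ceinv x = 1 := by
    intro x
    rw [toC_nk, hceinv, ← Complex.exp_add]
    push_cast
    ring_nf
    exact Complex.exp_zero
  have habsm : ∀ x ∈ Icc (0:ℝ) 1, ‖toC (m x)‖ = 1 := by
    intro x hx; rw [toC_abs]; exact hnorm x hx
  have habsw : ∀ x ∈ Icc (0:ℝ) 1, ‖w x‖ = 1 := by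
    intro x hx
    rw [hwdef]
    simp only [norm_mul, habsm x hx, hceinv, Complex.norm_exp_ofReal_mul_I, mul_one]
  have hwsub : ∀ x : ℝ, w x - 1 = (toC (m x) - toC (nk k x)) * ceinv x := by
    intro x
    rw [hwdef, sub_mul, hmul1]
  have habsw1 : ∀ x ∈ Icc (0:ℝ) 1, ‖w x - 1‖ < 1 := by
    intro x hx
    rw [hwsub, norm_mul, hceinv, Complex.norm_exp_ofReal_mul_I, mul_one, ← toC_sub, toC_abs]
    exact hclose x hx
  have hrew : ∀ x ∈ Icc (0:ℝ) 1, 1/2 < (w x).re := by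
    intro x hx
    have h1' := habsw1 x hx
    have h2' := habsw x hx
    have e1' : ‖w x - 1‖ ^ 2 = ((w x).re - 1)^2 + (w x).im^2 := by
      rw [Complex.sq_norm, Complex.normSq_apply]
      simp [Complex.sub_re, Complex.sub_im]; ring
    have e2' : ((w x).re)^2 + (w x).im^2 = 1 := by
      have h3' := Complex.sq_norm (w x)
      rw [h2', Complex.normSq_apply] at h3'
      nlinarith [h3']
    nlinarith [norm_nonneg (w x - 1), sq_nonneg (‖w x - 1‖)]
  set g : ℝ → ℝ := fun x => (w x).arg with hgdef
  have hwexp : ∀ x ∈ Icc (0:ℝ) 1, w x = Complex.exp ((g x : ℝ) * Complex.I) := by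
    intro x hx
    have := Complex.norm_mul_exp_arg_mul_I (w x)
    rw [habsw x hx] at this
    simpa using this.symm
  have hmw : ∀ x : ℝ, toC (m x) = w x * toC (nk k x) := by
    intro x
    rw [hwdef, mul_assoc, mul_comm (ceinv x), hmul1, mul_one]
  refine ⟨fun x => 2*k*π*x + g x, ?_, ?_, ?_, ?_, ?_⟩
  · apply ContinuousOn.add
    · exact (continuous_const.mul continuous_id).continuousOn
    · intro x hx
      have hwc : ContinuousWithinAt w (Icc 0 1) x := by
        apply ContinuousWithinAt.mul
        · exact (continuous_toC.continuousAt).comp_continuousWithinAt (hcont x hx)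
        · apply Continuous.continuousWithinAt
          apply Complex.continuous_exp.comp
          exact (Complex.continuous_ofReal.comp
            ((continuous_const.mul continuous_id).neg)).mul continuous_const
      exact (Complex.continuousAt_arg (Complex.mem_slitPlane_iff.2
        (Or.inl (by linarith [hrew x hx])))).comp_continuousWithinAt hwc
  · have hc0 : ceinv 0 = 1 := by
      show Complex.exp ((-(2*(k:ℝ)*π*0) : ℝ) * Complex.I) = 1
      have e : ((-(2*(k:ℝ)*π*0) : ℝ) : ℂ) * Complex.I = 0 := by push_cast; ring
      rw [e, Complex.exp_zero]
    have hw0 : w 0 = 1 := by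
      show toC (m 0) * ceinv 0 = 1
      rw [hc0, h0, toC_e1, one_mul]
    show 2*(k:ℝ)*π*0 + (w 0).arg = 0
    rw [hw0, Complex.arg_one]; ring
  · have hc1 : ceinv 1 = 1 := by
      show Complex.exp ((-(2*(k:ℝ)*π*1) : ℝ) * Complex.I) = 1
      have e : ((-(2*(k:ℝ)*π*1) : ℝ) : ℂ) * Complex.I = (-k : ℤ) * (2 * (π:ℂ) * Complex.I) := by
        push_cast; ring
      rw [e, Complex.exp_int_mul_two_pi_mul_I]
    have hw1 : w 1 = 1 := by
      show toC (m 1) * ceinv 1 = 1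
      rw [hc1, h1, toC_e1, one_mul]
    show 2*(k:ℝ)*π*1 + (w 1).arg = 2*(k:ℝ)*π
    rw [hw1, Complex.arg_one]; ring
  · intro x hx
    rw [hmw x, hwexp x hx, toC_nk, ← Complex.exp_add]
    congr 1
    push_cast; ring
  · intro x hx hne hcontra
    have hg0 : g x = 0 := by
      have : 2*(k:ℝ)*π*x + g x = 2*(k:ℝ)*π*x := hcontra
      linarith
    have : w x = 1 := by
      rw [hwexp x hx, hg0]
      norm_num
    apply hne
    apply toC_inj
    rw [hmw x, this, one_mul]


lemma norm_sq_E2 (a b : ℝ) : ‖((WithLp.equiv 2 (Fin 2 → ℝ)).symm ![a, b] : E2)‖^2 = a^2 + b^2 := by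
  rw [EuclideanSpace.norm_eq, sq_sqrt (by positivity)]
  simp [Fin.sum_univ_two, sq_abs]

lemma nk_hasDerivAt (k : ℤ) (x : ℝ) :
    HasDerivAt (nk k) ((WithLp.equiv 2 (Fin 2 → ℝ)).symm
      ![-(2 * k * π) * Real.sin (2 * k * π * x), (2 * k * π) * Real.cos (2 * k * π * x)]) x := by
  have h0 : HasDerivAt (fun x : ℝ => 2 * (k:ℝ) * π * x) (2 * k * π) x := by
    simpa using (hasDerivAt_id x).const_mul (2 * (k:ℝ) * π)
  have hc : HasDerivAt (fun x : ℝ => Real.cos (2 * k * π * x))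
      (-(2 * k * π) * Real.sin (2 * k * π * x)) x := by
    have := h0.cos; convert this using 1; ring
  have hs : HasDerivAt (fun x : ℝ => Real.sin (2 * k * π * x))
      ((2 * k * π) * Real.cos (2 * k * π * x)) x := by
    have := h0.sin; convert this using 1; ring
  have hpi : HasDerivAt (fun x : ℝ => (![Real.cos (2 * k * π * x), Real.sin (2 * k * π * x)] : Fin 2 → ℝ))
      (![-(2 * k * π) * Real.sin (2 * k * π * x), (2 * k * π) * Real.cos (2 * k * π * x)] : Fin 2 → ℝ) x := by
    refine hasDerivAt_pi.2 fun i => ?_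
    fin_cases i
    · simpa [neg_mul] using hc
    · simpa using hs
  exact ((PiLp.continuousLinearEquiv 2 ℝ (fun _ : Fin 2 => ℝ)).symm.hasFDerivAt.comp_hasDerivAt x hpi :)

lemma norm_deriv_nk (k : ℤ) (x : ℝ) : ‖deriv (nk k) x‖ ^ 2 = 4 * (k:ℝ)^2 * π^2 := by
  rw [(nk_hasDerivAt k x).deriv, norm_sq_E2]
  have := Real.sin_sq_add_cos_sq (2 * k * π * x)
  nlinarith [this]

lemma dirichlet_nk (k : ℤ) : dirichlet (nk k) = 4 * (k:ℝ)^2 * π^2 := by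
  unfold dirichlet
  simp [norm_deriv_nk k]


lemma two_sin_bound {t δ : ℝ} (hδ0 : 0 < δ) (hδ1 : δ ≤ 1) (ht : |t| ≤ δ) :
    |t| * (1 - δ^2/16) ≤ 2 * |Real.sin (t/2)| := by
  rcases eq_or_ne t 0 with rfl | ht0
  · simp
  have hs0 : 0 < |t|/2 := by positivity
  have hs1 : |t|/2 ≤ 1 := by
    have := abs_nonneg t; linarith
  have habs : |Real.sin (t/2)| = Real.sin (|t|/2) := by
    rcases le_or_gt 0 t with h | h
    · have ht' : t ≤ δ := by rwa [_root_.abs_of_nonneg h] at ht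
      rw [_root_.abs_of_nonneg h, _root_.abs_of_nonneg]
      apply Real.sin_nonneg_of_nonneg_of_le_pi (by linarith)
      linarith [Real.pi_gt_three]
    · have ht' : -t ≤ δ := by rwa [abs_of_neg h] at ht
      rw [abs_of_neg h, _root_.abs_of_nonpos, ← Real.sin_neg]
      · ring_nf
      · apply Real.sin_nonpos_of_nonpos_of_neg_pi_le (by linarith)
        have := Real.pi_gt_three; linarith
  rw [habs]
  have hgt := Real.sin_gt_sub_cube hs0
  have hcube : (|t|/2)^3/4 ≤ (|t|/2) * (δ^2/16) := by
    have h2 : (|t|/2)^2 ≤ (δ/2)^2 := by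
      apply pow_le_pow_left₀ (by positivity) (by linarith)
    nlinarith [hs0.le]
  nlinarith [pow_pos hs0 3]

lemma abs_exp_sub_exp (a b : ℝ) :
    ‖Complex.exp (a * Complex.I) - Complex.exp (b * Complex.I)‖
      = 2 * |Real.sin ((a - b)/2)| := by
  have key : Complex.exp (a * Complex.I) - Complex.exp (b * Complex.I)
      = Complex.exp ((b:ℝ) * Complex.I) * (Complex.exp (((a - b : ℝ)) * Complex.I) - 1) := by
    rw [mul_sub, ← Complex.exp_add, mul_one]
    push_cast
    ring_nf
  rw [key, norm_mul, Complex.norm_exp_ofReal_mul_I, one_mul, Complex.norm_def]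
  have hre : (Complex.exp (((a - b : ℝ)) * Complex.I) - 1).re = Real.cos (a - b) - 1 := by
    simp only [Complex.sub_re, Complex.one_re, Complex.exp_ofReal_mul_I_re]
  have him : (Complex.exp (((a - b : ℝ)) * Complex.I) - 1).im = Real.sin (a - b) := by
    simp only [Complex.sub_im, Complex.one_im, Complex.exp_ofReal_mul_I_im, sub_zero]
  rw [Complex.normSq_apply, hre, him]
  have hhalf : Real.sin ((a - b)/2)^2 = 1/2 - Real.cos (a - b) / 2 := by
    have h := Real.sin_sq_eq_half_sub ((a - b)/2)
    rw [h]; ring_nf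
  have hpyth := Real.sin_sq_add_cos_sq (a - b)
  have heq : (Real.cos (a-b) - 1) * (Real.cos (a-b) - 1) + Real.sin (a-b) * Real.sin (a-b)
      = (2 * |Real.sin ((a - b)/2)|)^2 := by
    rw [mul_pow, _root_.sq_abs]
    nlinarith
  rw [heq, Real.sqrt_sq (by positivity)]

lemma chord_sq_le (f : ℝ → E2) {u v : ℝ} (huv : u ≤ v)
    (h1 : IntervalIntegrable f volume u v)
    (h2 : IntervalIntegrable (fun x => ‖f x‖^2) volume u v) :
    ‖∫ x in u..v, f x‖^2 ≤ (v - u) * ∫ x in u..v, ‖f x‖^2 := by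
  set L := v - u with hL
  have hL0 : 0 ≤ L := sub_nonneg.2 huv
  set E := ∫ x in u..v, ‖f x‖^2 with hE
  have hE0 : 0 ≤ E := intervalIntegral.integral_nonneg huv (fun x _ => by positivity)
  set A := ∫ x in u..v, ‖f x‖ with hA
  have hA0 : 0 ≤ A := intervalIntegral.integral_nonneg huv (fun x _ => by positivity)
  have hnA : ‖∫ x in u..v, f x‖ ≤ A := intervalIntegral.norm_integral_le_integral_norm huv
  have key : ∀ t : ℝ, 0 < t → A ≤ (t * E + L / t) / 2 := by
    intro t ht
    have hint : IntervalIntegrable (fun x => (t * ‖f x‖^2 + 1/t) / 2) volume u v := by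
      exact ((h2.const_mul t).add (intervalIntegrable_const)).div_const 2
    have hmono : A ≤ ∫ x in u..v, (t * ‖f x‖^2 + 1/t) / 2 := by
      apply intervalIntegral.integral_mono_on huv h1.norm hint
      intro x _
      have key0 : (t * ‖f x‖^2 + 1/t)/2 - ‖f x‖ = (t * ‖f x‖ - 1)^2/(2*t) := by
        field_simp; ring
      have key1 : (0:ℝ) ≤ (t * ‖f x‖ - 1)^2/(2*t) :=
        div_nonneg (sq_nonneg _) (by linarith)
      linarith
    calc A ≤ ∫ x in u..v, (t * ‖f x‖^2 + 1/t) / 2 := hmono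
      _ = (t * E + L / t) / 2 := by
        rw [intervalIntegral.integral_div, intervalIntegral.integral_add (h2.const_mul t)
          intervalIntegrable_const, intervalIntegral.integral_const_mul,
          intervalIntegral.integral_const, smul_eq_mul]
        rw [hE, hL]; ring
  have hA2 : A^2 ≤ L * E := by
    rcases eq_or_lt_of_le hA0 with hA' | hA'
    · rw [← hA']; simpa using mul_nonneg hL0 hE0
    rcases eq_or_lt_of_le hE0 with hE' | hE'
    · exfalso
      rcases eq_or_lt_of_le hL0 with hL' | hL'
      · have h1' := key 1 one_pos
        rw [← hE', ← hL'] at h1'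
        simp at h1'; linarith
      · have h1' := key (L / A) (by positivity)
        rw [← hE'] at h1'
        have : L / (L / A) = A := by field_simp
        rw [this] at h1'
        linarith
    · have h1' := key (A / E) (by positivity)
      have e1' : A / E * E = A := div_mul_cancel₀ _ (ne_of_gt hE')
      have e2' : L / (A / E) = L * E / A := by
        field_simp
      rw [e1', e2'] at h1'
      have h3' : A ≤ L * E / A := by linarith
      rw [le_div_iff₀ hA'] at h3'
      nlinarith
  calc ‖∫ x in u..v, f x‖^2 ≤ A^2 := by
        apply pow_le_pow_left₀ (norm_nonneg _) hnA
    _ ≤ L * E := hA2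

lemma energy_lb (φ F : ℝ → ℝ) {u v : ℝ} (huv : u < v)
    (hφ : ContinuousOn φ (Icc u v))
    (hFi : IntervalIntegrable F volume u v)
    (hchord : ∀ a b, u ≤ a → a ≤ b → b ≤ v →
      (2 * |Real.sin ((φ b - φ a)/2)|)^2 ≤ (b - a) * ∫ x in a..b, F x) :
    (φ v - φ u)^2 / (v - u) ≤ ∫ x in u..v, F x := by
  set T := (φ v - φ u)^2 / (v - u) with hTdef
  have hT0 : 0 ≤ T := div_nonneg (sq_nonneg _) (by linarith)
  have main : ∀ δ : ℝ, 0 < δ → δ ≤ 1 → (1 - δ^2/16)^2 * T ≤ ∫ x in u..v, F x := by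
    intro δ hδ0 hδ1
    set c1 := 1 - δ^2/16 with hc1def
    have hc10 : 0 ≤ c1 := by rw [hc1def]; nlinarith
    have huc := isCompact_Icc.uniformContinuousOn_of_continuous hφ
    rw [Metric.uniformContinuousOn_iff] at huc
    obtain ⟨η, hη0, hηP⟩ := huc δ hδ0
    obtain ⟨N, hN⟩ := exists_nat_gt ((v - u)/η)
    have hvupos : 0 < v - u := by linarith
    have hN0 : 0 < (N:ℝ) := lt_trans (by positivity) hN
    set Δ := (v - u)/N with hΔdef
    have hΔ0 : 0 < Δ := by positivity
    have hΔη : Δ < η := by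
      rw [hΔdef, div_lt_iff₀ hN0]
      rw [div_lt_iff₀ hη0] at hN
      linarith [mul_comm η (N:ℝ)]
    set p : ℕ → ℝ := fun j => u + j * Δ with hpdef
    have hp0 : p 0 = u := by simp [hpdef]
    have hpN : p N = v := by
      simp only [hpdef, hΔdef]; field_simp; ring
    have hpmem : ∀ j : ℕ, j ≤ N → p j ∈ Icc u v := by
      intro j hj
      constructor
      · simp only [hpdef]; have : (0:ℝ) ≤ j * Δ := by positivity
        linarith
      · simp only [hpdef]
        have h1 : (j:ℝ) * Δ ≤ N * Δ := by
          apply mul_le_mul_of_nonneg_right _ hΔ0.le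
          exact_mod_cast hj
        have hNΔ : (N:ℝ) * Δ = v - u := by rw [hΔdef]; field_simp
        linarith
    have hsucc : ∀ j : ℕ, p (j+1) - p j = Δ := by
      intro j; simp only [hpdef]; push_cast; ring
    set a : ℕ → ℝ := fun j => φ (p (j+1)) - φ (p j) with hadef
    have hsum : ∑ j ∈ Finset.range N, a j = φ v - φ u := by
      rw [hadef, Finset.sum_range_sub (fun j => φ (p j)), hp0, hpN]
    have ha : ∀ j : ℕ, j < N → |a j| ≤ δ := by
      intro j hj
      have h1 := hηP (p (j+1)) (hpmem _ (by omega)) (p j) (hpmem _ (by omega)) ?_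
      · rw [Real.dist_eq] at h1; exact h1.le
      · rw [Real.dist_eq, hsucc j, abs_of_pos hΔ0]; exact hΔη
    have hchordj : ∀ j : ℕ, j < N → c1^2 * (a j)^2 / Δ ≤ ∫ x in p j..p (j+1), F x := by
      intro j hj
      have hmemj := hpmem j (by omega)
      have hmemj1 := hpmem (j+1) (by omega)
      have hle : p j ≤ p (j+1) := by have := hsucc j; linarith
      have h1 := hchord (p j) (p (j+1)) hmemj.1 hle hmemj1.2
      have h2 := two_sin_bound hδ0 hδ1 (ha j hj)
      have h3 : (|a j| * c1)^2 ≤ (2 * |Real.sin (a j / 2)|)^2 := by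
        apply pow_le_pow_left₀ (by positivity) h2
      rw [mul_pow, _root_.sq_abs] at h3
      rw [hsucc j] at h1
      rw [div_le_iff₀ hΔ0]
      calc c1^2 * (a j)^2 = (a j)^2 * c1^2 := by ring
        _ ≤ (2 * |Real.sin (a j / 2)|)^2 := h3
        _ ≤ Δ * ∫ x in p j..p (j+1), F x := h1
        _ = (∫ x in p j..p (j+1), F x) * Δ := by ring
    have hintj : ∀ j : ℕ, j < N → IntervalIntegrable F volume (p j) (p (j+1)) := by
      intro j hj
      apply hFi.mono_set
      rw [uIcc_of_le huv.le, uIcc_of_le (by have := hsucc j; linarith)]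
      exact Icc_subset_Icc (hpmem j (by omega)).1 (hpmem (j+1) (by omega)).2
    have hsplit : ∑ j ∈ Finset.range N, ∫ x in p j..p (j+1), F x = ∫ x in u..v, F x := by
      have := intervalIntegral.sum_integral_adjacent_intervals (μ := volume) (f := F)
        (a := p) (n := N) hintj
      rw [hp0, hpN] at this; exact this
    have hEngel : (φ v - φ u)^2 ≤ (N:ℝ) * ∑ j ∈ Finset.range N, (a j)^2 := by
      have := sq_sum_le_card_mul_sum_sq (s := Finset.range N) (f := a)
      rw [hsum] at this
      simpa [Function.comp_def] using this
    have hsum2 : ∑ j ∈ Finset.range N, c1^2 * (a j)^2 / Δ ≤ ∫ x in u..v, F x := by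
      rw [← hsplit]
      exact Finset.sum_le_sum (fun j hj => hchordj j (Finset.mem_range.1 hj))
    have heq : ∑ j ∈ Finset.range N, c1^2 * (a j)^2 / Δ
        = c1^2 / Δ * ∑ j ∈ Finset.range N, (a j)^2 := by
      rw [Finset.mul_sum]
      apply Finset.sum_congr rfl
      intro j _; ring
    have hNΔ : (N:ℝ) * Δ = v - u := by rw [hΔdef]; field_simp
    have final : c1^2 * T ≤ c1^2 / Δ * ∑ j ∈ Finset.range N, (a j)^2 := by
      rw [hTdef, ← mul_div_assoc, div_mul_eq_mul_div, div_le_div_iff₀ hvupos hΔ0]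
      calc c1^2 * (φ v - φ u)^2 * Δ ≤ c1^2 * ((N:ℝ) * ∑ j ∈ Finset.range N, (a j)^2) * Δ := by
            apply mul_le_mul_of_nonneg_right _ hΔ0.le
            apply mul_le_mul_of_nonneg_left hEngel
            positivity
        _ = c1^2 * (∑ j ∈ Finset.range N, (a j)^2) * ((N:ℝ) * Δ) := by ring
        _ = c1^2 * (∑ j ∈ Finset.range N, (a j)^2) * (v - u) := by rw [hNΔ]
    calc c1^2 * T ≤ c1^2 / Δ * ∑ j ∈ Finset.range N, (a j)^2 := final
      _ = ∑ j ∈ Finset.range N, c1^2 * (a j)^2 / Δ := heq.symm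
      _ ≤ ∫ x in u..v, F x := hsum2
  -- pass to the limit δ → 0
  have htend : Filter.Tendsto (fun n : ℕ => (1 - (1/((n:ℝ)+1))^2/16)^2 * T)
      Filter.atTop (nhds T) := by
    have t1 : Filter.Tendsto (fun n : ℕ => 1/((n:ℝ)+1)) Filter.atTop (nhds 0) :=
      tendsto_one_div_add_atTop_nhds_zero_nat
    have t2 : Continuous (fun d : ℝ => (1 - d^2/16)^2 * T) := by continuity
    have := (t2.tendsto 0).comp t1
    simpa [Function.comp_def] using this
  apply le_of_tendsto htend
  filter_upwards with n
  apply main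
  · positivity
  · rw [div_le_one (by positivity)]
    have : (0:ℝ) ≤ (n:ℝ) := by positivity
    linarith

lemma nk_zero_fun : nk 0 = fun _ => e1 := by
  funext x
  unfold nk e1
  norm_num

lemma norm_e1 : ‖e1‖ = 1 := by
  have h := norm_sq_E2 1 0
  have h2 : ‖e1‖^2 = 1 := by rw [e1]; rw [h]; norm_num
  nlinarith [norm_nonneg e1]

lemma nk_boundary (k : ℤ) : nk k 0 = e1 ∧ nk k 1 = e1 := by
  constructor
  · unfold nk e1; norm_num
  · unfold nk e1
    have hc : Real.cos (2*(k:ℝ)*π*1) = 1 := by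
      rw [show (2*(k:ℝ)*π*1) = (k:ℝ)*(2*π) by ring]
      exact_mod_cast Real.cos_int_mul_two_pi k
    have hs : Real.sin (2*(k:ℝ)*π*1) = 0 := by
      rw [show (2*(k:ℝ)*π*1) = ((2*k : ℤ):ℝ)*π by push_cast; ring]
      exact Real.sin_int_mul_pi (2*k)
    rw [hc, hs]

lemma adm1_nk0 : Adm1 (nk 0) := by
  have hd : deriv (nk 0) = fun _ => 0 := by
    rw [nk_zero_fun]; funext x; exact deriv_const x e1
  refine ⟨?_, ?_, ?_, ?_, ?_, ?_⟩
  · rw [nk_zero_fun]; exact continuous_const.continuousOn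
  · have : (fun x => ‖deriv (nk 0) x‖^2) = fun _ => (0:ℝ) := by
      funext x; rw [hd]; simp
    rw [this]
    exact integrableOn_const (by simp)
  · intro z _
    rw [hd, nk_zero_fun]
    simp
  · intro x _
    rw [nk_zero_fun]; exact norm_e1
  · rw [nk_zero_fun]
  · rw [nk_zero_fun]

lemma deriv_m_integrable (m : ℝ → E2)
    (hm2 : IntegrableOn (fun x => ‖deriv m x‖^2) (Ioo (0:ℝ) 1) volume) :
    IntervalIntegrable (fun x => ‖deriv m x‖^2) volume 0 1 ∧
    IntervalIntegrable (deriv m) volume 0 1 := by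
  have hIoc2 : IntegrableOn (fun x => ‖deriv m x‖^2) (Ioc (0:ℝ) 1) volume :=
    hm2.congr_set_ae Ioo_ae_eq_Ioc.symm
  have hii2 : IntervalIntegrable (fun x => ‖deriv m x‖^2) volume 0 1 := by
    rw [intervalIntegrable_iff, uIoc_of_le (by norm_num : (0:ℝ) ≤ 1)]
    exact hIoc2
  refine ⟨hii2, ?_⟩
  rw [intervalIntegrable_iff, uIoc_of_le (by norm_num : (0:ℝ) ≤ 1)]
  have hmeas : AEStronglyMeasurable (deriv m) (volume.restrict (Ioc (0:ℝ) 1)) :=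
    (stronglyMeasurable_deriv m).aestronglyMeasurable
  apply Integrable.mono' (g := fun x => 1 + ‖deriv m x‖^2) ?_ hmeas ?_
  · apply Integrable.add
    · exact integrableOn_const (by simp)
    · exact hIoc2
  · filter_upwards with x
    nlinarith [sq_nonneg (‖deriv m x‖ - 1), norm_nonneg (deriv m x)]

lemma nk_continuous (k : ℤ) : Continuous (nk k) :=
  continuous_iff_continuousAt.2 (fun x => (nk_hasDerivAt k x).continuousAt)

/-- **Countably many strict strong local minimizers of the Dirichlet energy on
circle-valued maps.** Every `n_k(x) = (cos(2kπx), sin(2kπx))`, `k ∈ ℤ`, is a strict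
strong local minimizer of `I(n) = ∫₀¹ |n'|² dx` on `𝒜`, with `I(n_k) = 4k²π²`;
only `n_0 ≡ e₁` is the global minimizer. -/
theorem nk_strict_strong_local_min :
    (∀ k : ℤ, ∃ ε > (0 : ℝ), ∀ m : ℝ → E2, Adm1 m →
      0 < (⨆ x ∈ Icc (0 : ℝ) 1, ‖m x - nk k x‖) →
      (⨆ x ∈ Icc (0 : ℝ) 1, ‖m x - nk k x‖) < ε →
      dirichlet (nk k) < dirichlet m) ∧
    (∀ k : ℤ, dirichlet (nk k) = 4 * (k : ℝ) ^ 2 * π ^ 2) ∧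
    (∀ m : ℝ → E2, Adm1 m → dirichlet (nk 0) ≤ dirichlet m) ∧
    (∀ k : ℤ, k ≠ 0 → ∃ m : ℝ → E2, Adm1 m ∧ dirichlet m < dirichlet (nk k)) := by
  refine ⟨?_, dirichlet_nk, ?_, ?_⟩
  · -- strict strong local minimality
    intro k
    refine ⟨1, one_pos, ?_⟩
    intro m hm hpos hlt
    obtain ⟨hcont, hint, hrep, hnorm, hm0, hm1⟩ := hm
    have hFc : ContinuousOn (fun x => ‖m x - nk k x‖) (Icc (0:ℝ) 1) :=
      (hcont.sub (nk_continuous k).continuousOn).norm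
    obtain ⟨C, hC⟩ := isCompact_Icc.exists_bound_of_continuousOn hFc
    have hbdd : BddAbove (range (fun x => ⨆ _ : x ∈ Icc (0:ℝ) 1, ‖m x - nk k x‖)) := by
      refine ⟨max C 0, ?_⟩
      rintro y ⟨x, rfl⟩
      show (⨆ _ : x ∈ Icc (0:ℝ) 1, ‖m x - nk k x‖) ≤ max C 0
      by_cases hx : x ∈ Icc (0:ℝ) 1
      · rw [ciSup_pos hx]
        refine le_max_of_le_left ?_
        have := hC x hx
        rw [Real.norm_eq_abs] at this
        exact (le_abs_self _).trans this
      · haveI : IsEmpty (x ∈ Icc (0:ℝ) 1) := ⟨hx⟩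
        rw [Real.iSup_of_isEmpty]
        exact le_max_right _ _

    have hle : ∀ x ∈ Icc (0:ℝ) 1, ‖m x - nk k x‖ ≤ ⨆ x ∈ Icc (0:ℝ) 1, ‖m x - nk k x‖ := by
      intro x hx
      have h1 := le_ciSup hbdd x
      rwa [ciSup_pos hx] at h1
    have hclose : ∀ x ∈ Icc (0:ℝ) 1, ‖m x - nk k x‖ < 1 :=
      fun x hx => lt_of_le_of_lt (hle x hx) hlt
    have hex : ∃ x ∈ Icc (0:ℝ) 1, m x ≠ nk k x := by
      by_contra hno
      push_neg at hno
      have hzero : (fun x => ⨆ _ : x ∈ Icc (0:ℝ) 1, ‖m x - nk k x‖) = fun _ => (0:ℝ) := by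
        funext x
        by_cases hx : x ∈ Icc (0:ℝ) 1
        · rw [ciSup_pos hx, hno x hx, sub_self, norm_zero]
        · haveI : IsEmpty (x ∈ Icc (0:ℝ) 1) := ⟨hx⟩
          exact Real.iSup_of_isEmpty _
      have : (⨆ x ∈ Icc (0:ℝ) 1, ‖m x - nk k x‖) = 0 := by
        show iSup (fun x => ⨆ _ : x ∈ Icc (0:ℝ) 1, ‖m x - nk k x‖) = 0
        rw [hzero]
        exact ciSup_const
      rw [this] at hpos
      exact lt_irrefl 0 hpos
    obtain ⟨φ, hφc, hφ0, hφ1, hφexp, hφne⟩ :=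
      lift_exists k m ⟨hcont, hint, hrep, hnorm, hm0, hm1⟩ hclose
    obtain ⟨xs, hxsI, hxsne⟩ := hex
    have hxs0 : 0 < xs := by
      rcases eq_or_lt_of_le hxsI.1 with h | h
      · exfalso; apply hxsne; rw [← h, hm0, (nk_boundary k).1]
      · exact h
    have hxs1 : xs < 1 := by
      rcases eq_or_lt_of_le hxsI.2 with h | h
      · exfalso; apply hxsne; rw [h, hm1, (nk_boundary k).2]
      · exact h
    obtain ⟨hii2, hii1⟩ := deriv_m_integrable m hint
    have hmono2 : ∀ a b : ℝ, 0 ≤ a → a ≤ b → b ≤ 1 →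
        IntervalIntegrable (fun x => ‖deriv m x‖^2) volume a b := by
      intro a b ha hab hb
      apply hii2.mono_set
      rw [uIcc_of_le hab, uIcc_of_le (zero_le_one)]
      exact Icc_subset_Icc ha hb
    have hmono1 : ∀ a b : ℝ, 0 ≤ a → a ≤ b → b ≤ 1 →
        IntervalIntegrable (deriv m) volume a b := by
      intro a b ha hab hb
      apply hii1.mono_set
      rw [uIcc_of_le hab, uIcc_of_le (zero_le_one)]
      exact Icc_subset_Icc ha hb
    have hchord : ∀ a b : ℝ, 0 ≤ a → a ≤ b → b ≤ 1 →
        (2 * |Real.sin ((φ b - φ a)/2)|)^2 ≤ (b - a) * ∫ x in a..b, ‖deriv m x‖^2 := by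
      intro a b ha hab hb
      have hmema : a ∈ Icc (0:ℝ) 1 := ⟨ha, hab.trans hb⟩
      have hmemb : b ∈ Icc (0:ℝ) 1 := ⟨ha.trans hab, hb⟩
      have hsub : m b - m a = ∫ x in a..b, deriv m x := by
        rw [hrep b hmemb, hrep a hmema]
        rw [add_sub_add_left_eq_sub]
        exact intervalIntegral.integral_interval_sub_left
          (hmono1 0 b le_rfl (ha.trans hab) hb) (hmono1 0 a le_rfl ha (hab.trans hb))
      have hnorm_eq : ‖m b - m a‖ = 2 * |Real.sin ((φ b - φ a)/2)| := by
        rw [← toC_abs, toC_sub, hφexp b hmemb, hφexp a hmema, abs_exp_sub_exp]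
      calc (2 * |Real.sin ((φ b - φ a)/2)|)^2 = ‖m b - m a‖^2 := by rw [hnorm_eq]
        _ = ‖∫ x in a..b, deriv m x‖^2 := by rw [hsub]
        _ ≤ (b - a) * ∫ x in a..b, ‖deriv m x‖^2 :=
            chord_sq_le (deriv m) hab (hmono1 a b ha hab hb) (hmono2 a b ha hab hb)
    have hE1 : (φ xs - φ 0)^2/(xs - 0) ≤ ∫ x in (0:ℝ)..xs, ‖deriv m x‖^2 := by
      apply energy_lb φ _ hxs0
      · exact hφc.mono (Icc_subset_Icc le_rfl hxs1.le)
      · exact hmono2 0 xs le_rfl hxs0.le hxs1.le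
      · intro a b ha hab hb
        exact hchord a b ha hab (hb.trans hxs1.le)
    have hE2 : (φ 1 - φ xs)^2/(1 - xs) ≤ ∫ x in xs..(1:ℝ), ‖deriv m x‖^2 := by
      apply energy_lb φ _ hxs1
      · exact hφc.mono (Icc_subset_Icc hxs0.le le_rfl)
      · exact hmono2 xs 1 hxs0.le hxs1.le le_rfl
      · intro a b ha hab hb
        exact hchord a b (hxs0.le.trans ha) hab hb
    have hsplit : (∫ x in (0:ℝ)..xs, ‖deriv m x‖^2) + (∫ x in xs..(1:ℝ), ‖deriv m x‖^2)
        = ∫ x in (0:ℝ)..1, ‖deriv m x‖^2 :=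
      intervalIntegral.integral_add_adjacent_intervals
        (hmono2 0 xs le_rfl hxs0.le hxs1.le) (hmono2 xs 1 hxs0.le hxs1.le le_rfl)
    have hφxs : φ xs ≠ 2*(k:ℝ)*π*xs := hφne xs hxsI hxsne
    have key : 4*(k:ℝ)^2*π^2 < (φ xs)^2/xs + (2*(k:ℝ)*π - φ xs)^2/(1-xs) := by
      have hxx : (0:ℝ) < xs * (1 - xs) := by nlinarith
      have hxsne0 : xs ≠ 0 := ne_of_gt hxs0
      have h1xsne0 : (1:ℝ) - xs ≠ 0 := by linarith
      have hid : (φ xs)^2/xs + (2*(k:ℝ)*π - φ xs)^2/(1-xs)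
          = 4*(k:ℝ)^2*π^2 + (φ xs - 2*(k:ℝ)*π*xs)^2/(xs*(1-xs)) := by
        field_simp
        ring
      rw [hid]
      have hpos2 : 0 < (φ xs - 2*(k:ℝ)*π*xs)^2/(xs*(1-xs)) :=
        div_pos (sq_pos_of_ne_zero (sub_ne_zero.2 hφxs)) hxx
      linarith
    rw [dirichlet_nk]
    show 4*(k:ℝ)^2*π^2 < ∫ x in (0:ℝ)..1, ‖deriv m x‖^2
    rw [← hsplit]
    have hE1' : (φ xs)^2/xs ≤ ∫ x in (0:ℝ)..xs, ‖deriv m x‖^2 := by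
      rw [hφ0, sub_zero] at hE1
      rwa [sub_zero] at hE1
    have hE2' : (2*(k:ℝ)*π - φ xs)^2/(1-xs) ≤ ∫ x in xs..(1:ℝ), ‖deriv m x‖^2 := by
      rwa [hφ1] at hE2
    calc 4*(k:ℝ)^2*π^2 < (φ xs)^2/xs + (2*(k:ℝ)*π - φ xs)^2/(1-xs) := key
      _ ≤ (∫ x in (0:ℝ)..xs, ‖deriv m x‖^2) + ∫ x in xs..(1:ℝ), ‖deriv m x‖^2 :=
          add_le_add hE1' hE2'
  · -- global minimality of n₀
    intro m _
    rw [dirichlet_nk 0]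
    have h0 : (4:ℝ) * (0:ℤ)^2 * π^2 = 0 := by norm_num
    rw [show ((0:ℤ):ℝ) = 0 by norm_num]
    have : (0:ℝ) ≤ dirichlet m :=
      intervalIntegral.integral_nonneg zero_le_one (fun x _ => by positivity)
    nlinarith
  · -- not global for k ≠ 0
    intro k hk
    refine ⟨nk 0, adm1_nk0, ?_⟩
    rw [dirichlet_nk, dirichlet_nk]
    have hk' : ((k:ℝ))^2 > 0 := by
      have : (k:ℝ) ≠ 0 := Int.cast_ne_zero.2 hk
      positivity
    have h0' : ((0:ℤ):ℝ) = 0 := by norm_num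
    rw [h0']
    have hp2 : 0 < (k:ℝ)^2 * π^2 := mul_pos hk' (by positivity)
    nlinarith [hp2]

end
end
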